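/- arXiv:2305.13572 — 6 statements merged into one kernel-verified Lean document; each statement's English description precedes it below -/
import Mathlib

section
/- Let d ≥ 1, n ≥ 1 and let X_1,…,X_n be i.i.d. ℝ^d-valued random variables with common characteristic function φ_X. Let h : ℝ^d → [0,∞) and let u ∈ ℝ^d be such that n·h(u) ≥ 1. Then for every κ > 0, P( |φ̂_{X,n}(u) − φ_X(u)| ≥ κ√(log(n h(u))/n) ) ≤ 4 (n h(u))^{−κ²/4}. -/
open MeasureTheory Real Filter
open scoped BigOperators ENNReal

noncomputable section

namespace ADE

variable {Ω : Type*} [MeasurableSpace Ω] {E : Type*} [MeasurableSpace E]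

/-- Dot product on ℝ^d. -/
def dot {d : ℕ} (u x : Fin d → ℝ) : ℝ := ∑ i, u i * x i

/-- Characteristic function of a measure on ℝ^d. -/
def charFun {d : ℕ} (μ : Measure (Fin d → ℝ)) (u : Fin d → ℝ) : ℂ :=
  ∫ x, Complex.exp (Complex.I * (dot u x : ℂ)) ∂μ

/-- Empirical characteristic function from observations X_1, …, X_n. -/
def empCF {d n : ℕ} (X : Fin n → Ω → (Fin d → ℝ)) (ω : Ω) (u : Fin d → ℝ) : ℂ :=
  (n : ℂ)⁻¹ * ∑ j, Complex.exp (Complex.I * (dot u (X j ω) : ℂ))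

/-- Thresholded empirical characteristic function. -/
def threshCF {d n : ℕ} (κ : ℝ) (X : Fin n → Ω → (Fin d → ℝ)) (ω : Ω) (u : Fin d → ℝ) : ℂ :=
  if (1 + κ * Real.sqrt (Real.log n)) / Real.sqrt n ≤ ‖empCF X ω u‖
    then empCF X ω u else 0

/-- The cube [-m, m] = [-m₁,m₁] × ⋯ × [-m_d,m_d]. -/
def cube {d : ℕ} (m : Fin d → ℝ) : Set (Fin d → ℝ) := {u | ∀ i, |u i| ≤ m i}

/-- The density estimator f̂_n. -/
def fhat {d n : ℕ} (κ : ℝ) (X : Fin n → Ω → (Fin d → ℝ)) (ω : Ω) (x : Fin d → ℝ) : ℂ :=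
  (((2 * π) ^ d : ℝ) : ℂ)⁻¹ *
    ∫ u in cube (fun _ => (n : ℝ)), Complex.exp (-(Complex.I * (dot u x : ℂ))) * threshCF κ X ω u

/-- Fourier transform 𝓕f(u) = ∫ e^{i⟨u,x⟩} f(x) dx. -/
def fourierT {d : ℕ} (f : (Fin d → ℝ) → ℝ) (u : Fin d → ℝ) : ℂ :=
  ∫ x, Complex.exp (Complex.I * (dot u x : ℂ)) * (f x : ℂ)

/-- The function f_{A,m}, whose Fourier transform is (𝓕f)·1_{A([-m,m])}, via Fourier inversion. -/
def cutoffFn {d : ℕ} (A : Matrix (Fin d) (Fin d) ℝ) (m : Fin d → ℝ)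
    (f : (Fin d → ℝ) → ℝ) (x : Fin d → ℝ) : ℂ :=
  (((2 * π) ^ d : ℝ) : ℂ)⁻¹ *
    ∫ u in A.mulVec '' cube m, Complex.exp (-(Complex.I * (dot u x : ℂ))) * fourierT f u

/-- The class 𝓐 of invertible matrices mapping [-1,1]^d into itself. -/
def memA {d : ℕ} (A : Matrix (Fin d) (Fin d) ℝ) : Prop :=
  A.det ≠ 0 ∧ ∀ x : Fin d → ℝ, (∀ i, |x i| ≤ 1) → ∀ i, |A.mulVec x i| ≤ 1

/-- Empirical characteristic function from the first n terms of a sequence. -/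
def empCFseq {d : ℕ} (X : ℕ → Ω → (Fin d → ℝ)) (n : ℕ) (ω : Ω) (u : Fin d → ℝ) : ℂ :=
  (n : ℂ)⁻¹ * ∑ j : Fin n, Complex.exp (Complex.I * (dot u (X j ω) : ℂ))

/-- Thresholded empirical characteristic function (sequence version). -/
def threshCFseq {d : ℕ} (κ : ℝ) (X : ℕ → Ω → (Fin d → ℝ)) (n : ℕ) (ω : Ω) (u : Fin d → ℝ) : ℂ :=
  if (1 + κ * Real.sqrt (Real.log n)) / Real.sqrt n ≤ ‖empCFseq X n ω u‖
    then empCFseq X n ω u else 0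

/-- The density estimator f̂_n (sequence version). -/
def fhatSeq {d : ℕ} (κ : ℝ) (X : ℕ → Ω → (Fin d → ℝ)) (n : ℕ) (ω : Ω) (x : Fin d → ℝ) : ℂ :=
  (((2 * π) ^ d : ℝ) : ℂ)⁻¹ *
    ∫ u in cube (fun _ => (n : ℝ)),
      Complex.exp (-(Complex.I * (dot u x : ℂ))) * threshCFseq κ X n ω u

/-- Rosenblatt's α-dependence coefficient between two sub-σ-algebras. -/
def alphaDep (P : Measure Ω) (F G : MeasurableSpace Ω) : ℝ :=
  2 * sSup {x | ∃ A B : Set Ω, MeasurableSet[F] A ∧ MeasurableSet[G] B ∧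
      x = |(P (A ∩ B)).toReal - (P A).toReal * (P B).toReal|}

/-- σ-algebra generated by X_i, i ≤ k. -/
def sigmaLE (X : ℕ → Ω → E) (k : ℕ) : MeasurableSpace Ω :=
  ⨆ i ∈ Set.Iic k, MeasurableSpace.comap (X i) ‹MeasurableSpace E›

/-- σ-algebra generated by X_i, i ≥ k. -/
def sigmaGE (X : ℕ → Ω → E) (k : ℕ) : MeasurableSpace Ω :=
  ⨆ i ∈ Set.Ici k, MeasurableSpace.comap (X i) ‹MeasurableSpace E›

/-- Strong mixing coefficients of a sequence. -/
def mixCoef (P : Measure Ω) (X : ℕ → Ω → E) (n : ℕ) : ℝ :=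
  if n = 0 then 1 / 2
  else sSup {x | ∃ k : ℕ, x = alphaDep P (sigmaLE X k) (sigmaGE X (k + n))}

/-- Strict stationarity of a sequence. -/
def IsStrictStationary (P : Measure Ω) (X : ℕ → Ω → E) : Prop :=
  ∀ i k : ℕ, Measure.map (fun ω => fun j : Fin k => X (i + (j : ℕ)) ω) P
    = Measure.map (fun ω => fun j : Fin k => X (j : ℕ) ω) P

/-- Upper incomplete Gamma function Γ(s,x) = ∫_x^∞ z^{s-1} e^{-z} dz. -/
def incGamma (s x : ℝ) : ℝ := ∫ z in Set.Ioi x, z ^ (s - 1) * Real.exp (-z)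



section Aux

open Real ProbabilityTheory

private lemma aux_Dpos (m t : ℝ) (hm : |m| ≤ 1) : 0 < Real.cosh t + m * Real.sinh t := by
  have hrw : Real.cosh t + m * Real.sinh t
      = (1 + m)/2 * Real.exp t + (1 - m)/2 * Real.exp (-t) := by
    rw [Real.cosh_eq, Real.sinh_eq]; ring
  rw [hrw]
  rw [abs_le] at hm
  rcases eq_or_lt_of_le hm.1 with h | h
  · have : m = -1 := h.symm
    subst this
    simpa using Real.exp_pos (-t)
  · have h1 : 0 < (1 + m)/2 := by linarith
    have h2 : 0 ≤ (1 - m)/2 := by linarith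
    positivity

private lemma aux_hoeffding_analytic (m t : ℝ) (hm : |m| ≤ 1) :
    Real.cosh t + m * Real.sinh t ≤ Real.exp (t^2/2 + t*m) := by
  set D : ℝ → ℝ := fun s => Real.cosh s + m * Real.sinh s with hD
  set N : ℝ → ℝ := fun s => Real.sinh s + m * Real.cosh s with hN
  have hDpos : ∀ s, 0 < D s := fun s => aux_Dpos m s hm
  have hDN : ∀ s, HasDerivAt D (N s) s := by
    intro s
    exact (Real.hasDerivAt_cosh s).add ((Real.hasDerivAt_sinh s).const_mul m)
  have hND : ∀ s, HasDerivAt N (D s) s := by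
    intro s
    exact (Real.hasDerivAt_sinh s).add ((Real.hasDerivAt_cosh s).const_mul m)
  have key : ∀ s, D s ^ 2 - N s ^ 2 = 1 - m ^ 2 := by
    intro s
    simp only [hD, hN]
    nlinarith [Real.cosh_sq_sub_sinh_sq s]
  set F : ℝ → ℝ := fun s => s^2/2 + s*m - Real.log (D s) with hF
  set G : ℝ → ℝ := fun s => s + m - N s / D s with hG
  have hFG : ∀ s, HasDerivAt F (G s) s := by
    intro s
    have h1 : HasDerivAt (fun s => s^2/2 + s*m) (s + m) s := by
      have := ((hasDerivAt_pow 2 s).div_const 2).add ((hasDerivAt_id s).mul_const m)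
      exact this.congr_deriv (by ring)
    have h2 : HasDerivAt (fun s => Real.log (D s)) (N s / D s) s :=
      (hDN s).log (hDpos s).ne'
    exact h1.sub h2
  have hGderiv : ∀ s, HasDerivAt G (N s ^ 2 / D s ^ 2) s := by
    intro s
    have hdiv : HasDerivAt (fun s => N s / D s) ((D s * D s - N s * N s) / D s ^ 2) s :=
      (hND s).div (hDN s) (hDpos s).ne'
    have h1 : HasDerivAt (fun s : ℝ => s + m) 1 s := (hasDerivAt_id s).add_const m
    have := h1.sub hdiv
    have heq : 1 - (D s * D s - N s * N s) / D s ^ 2 = N s ^ 2 / D s ^ 2 := by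
      have hne : D s ^ 2 ≠ 0 := (pow_pos (hDpos s) 2).ne'
      rw [eq_div_iff hne, sub_mul, div_mul_cancel₀ _ hne]
      nlinarith [key s]
    rw [heq] at this
    exact this
  have hGmono : Monotone G :=
    monotone_of_deriv_nonneg (fun s => (hGderiv s).differentiableAt)
      (fun s => by rw [(hGderiv s).deriv]; positivity)
  have hG0 : G 0 = 0 := by simp [hG, hN, hD]
  have hF0 : F 0 = 0 := by simp [hF, hD]
  have hFnonneg : 0 ≤ F t := by
    rcases le_total 0 t with ht | ht
    · have hmono : MonotoneOn F (Set.Ici (0:ℝ)) := by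
        apply monotoneOn_of_deriv_nonneg (convex_Ici 0)
          (fun s _ => (hFG s).differentiableAt.continuousAt.continuousWithinAt)
          (fun s _ => (hFG s).differentiableAt.differentiableWithinAt)
        intro s hs
        rw [(hFG s).deriv]
        have : G 0 ≤ G s := hGmono (le_of_lt (by simpa using hs))
        linarith [hG0 ▸ this]
      have := hmono Set.self_mem_Ici (Set.mem_Ici.mpr ht) ht
      linarith [hF0 ▸ this]
    · have hmono : AntitoneOn F (Set.Iic (0:ℝ)) := by
        apply antitoneOn_of_deriv_nonpos (convex_Iic 0)
          (fun s _ => (hFG s).differentiableAt.continuousAt.continuousWithinAt)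
          (fun s _ => (hFG s).differentiableAt.differentiableWithinAt)
        intro s hs
        rw [(hFG s).deriv]
        have : G s ≤ G 0 := hGmono (le_of_lt (by simpa using hs))
        linarith [hG0 ▸ this]
      have := hmono (Set.mem_Iic.mpr ht) Set.self_mem_Iic ht
      linarith [hF0 ▸ this]
  have hlog : Real.log (D t) ≤ t^2/2 + t*m := by
    simp only [hF] at hFnonneg; linarith
  calc D t = Real.exp (Real.log (D t)) := (Real.exp_log (hDpos t)).symm
    _ ≤ Real.exp (t^2/2 + t*m) := Real.exp_le_exp.mpr hlog

private lemma aux_exp_le_cosh_add (w t : ℝ) (hw : |w| ≤ 1) :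
    Real.exp (t * w) ≤ Real.cosh t + w * Real.sinh t := by
  rw [abs_le] at hw
  have ha : (0:ℝ) ≤ (1 + w)/2 := by linarith
  have hb : (0:ℝ) ≤ (1 - w)/2 := by linarith
  have hab : (1 + w)/2 + (1 - w)/2 = 1 := by ring
  have := convexOn_exp.2 (Set.mem_univ t) (Set.mem_univ (-t)) ha hb hab
  simp only [smul_eq_mul] at this
  have h1 : (1 + w)/2 * t + (1 - w)/2 * (-t) = t * w := by ring
  rw [h1] at this
  calc Real.exp (t * w) ≤ (1 + w)/2 * Real.exp t + (1 - w)/2 * Real.exp (-t) := this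
    _ = Real.cosh t + w * Real.sinh t := by rw [Real.cosh_eq, Real.sinh_eq]; ring

private lemma aux_mgf_bounded {Ω : Type*} [MeasurableSpace Ω] (P : Measure Ω)
    [IsProbabilityMeasure P]
    (W : Ω → ℝ) (hWm : Measurable W) (hW : ∀ ω, |W ω| ≤ 1) (t : ℝ) :
    mgf (fun ω => W ω - ∫ ω, W ω ∂P) P t ≤ Real.exp (t^2/2) := by
  set m := ∫ ω, W ω ∂P with hm
  have hWint : Integrable W P :=
    ⟨hWm.aestronglyMeasurable, HasFiniteIntegral.of_bounded (C := 1) (Filter.Eventually.of_forall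
      (fun ω => by simpa using hW ω))⟩
  have habs : |m| ≤ 1 := by
    have h1 : |m| ≤ ∫ ω, |W ω| ∂P := by
      simpa [Real.norm_eq_abs] using norm_integral_le_integral_norm (μ := P) W
    have h2 : ∫ ω, |W ω| ∂P ≤ ∫ _ : Ω, (1:ℝ) ∂P :=
      integral_mono hWint.abs (integrable_const 1) (fun ω => hW ω)
    simp only [integral_const, measure_univ, ENNReal.toReal_one, probReal_univ, smul_eq_mul, one_mul] at h2
    linarith
  have hexpint : Integrable (fun ω => Real.exp (t * W ω)) P := by
    refine ⟨((hWm.const_mul t).exp).aestronglyMeasurable,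
      HasFiniteIntegral.of_bounded (C := Real.exp |t|) (Filter.Eventually.of_forall fun ω => ?_)⟩
    rw [Real.norm_eq_abs, abs_of_pos (Real.exp_pos _)]
    apply Real.exp_le_exp.mpr
    calc t * W ω ≤ |t * W ω| := le_abs_self _
      _ = |t| * |W ω| := abs_mul t (W ω)
      _ ≤ |t| * 1 := by gcongr; exact hW ω
      _ = |t| := mul_one _
  have hstep : ∫ ω, Real.exp (t * W ω) ∂P ≤ Real.cosh t + m * Real.sinh t := by
    have hrhsint : Integrable (fun ω => Real.cosh t + W ω * Real.sinh t) P :=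
      (integrable_const _).add (hWint.mul_const _)
    calc ∫ ω, Real.exp (t * W ω) ∂P ≤ ∫ ω, (Real.cosh t + W ω * Real.sinh t) ∂P :=
        integral_mono hexpint hrhsint (fun ω => aux_exp_le_cosh_add (W ω) t (hW ω))
      _ = Real.cosh t + m * Real.sinh t := by
        rw [integral_add (integrable_const _) (hWint.mul_const _), integral_const,
          integral_mul_const]
        simp [hm]
  have hfact : mgf (fun ω => W ω - m) P t = Real.exp (-(t*m)) * ∫ ω, Real.exp (t * W ω) ∂P := by
    rw [mgf, ← integral_const_mul]
    congr 1 with ω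
    rw [← Real.exp_add]
    ring_nf
  rw [hfact]
  calc Real.exp (-(t*m)) * ∫ ω, Real.exp (t * W ω) ∂P
      ≤ Real.exp (-(t*m)) * (Real.cosh t + m * Real.sinh t) := by
        gcongr
      _ ≤ Real.exp (-(t*m)) * Real.exp (t^2/2 + t*m) :=
        mul_le_mul_of_nonneg_left (aux_hoeffding_analytic m t habs) (Real.exp_pos _).le
      _ = Real.exp (t^2/2) := by rw [← Real.exp_add]; ring_nf

private lemma aux_sum_tail {Ω : Type*} [MeasurableSpace Ω] (P : Measure Ω)
    [IsProbabilityMeasure P]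
    {d n : ℕ} (X : Fin n → Ω → (Fin d → ℝ)) (hXmeas : ∀ j, Measurable (X j))
    (hindep : ProbabilityTheory.iIndepFun X P)
    (μ : Measure (Fin d → ℝ)) [IsProbabilityMeasure μ]
    (hident : ∀ j, Measure.map (X j) P = μ)
    (f : (Fin d → ℝ) → ℝ) (hfm : Measurable f) (hf : ∀ x, |f x| ≤ 1)
    (ε : ℝ) (hε : 0 ≤ ε) :
    (P {ω | (n : ℝ) * ε ≤ ∑ j, (f (X j ω) - ∫ x, f x ∂μ)}).toReal
      ≤ Real.exp (-(n : ℝ) * ε^2 / 2) := by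
  set m := ∫ x, f x ∂μ with hmdef
  have hfint : Integrable f μ :=
    ⟨hfm.aestronglyMeasurable, HasFiniteIntegral.of_bounded (C := 1)
      (Filter.Eventually.of_forall (fun x => by simpa using hf x))⟩
  have hm1 : |m| ≤ 1 := by
    have h1 : |m| ≤ ∫ x, |f x| ∂μ := by
      simpa [Real.norm_eq_abs] using norm_integral_le_integral_norm (μ := μ) f
    have h2 : ∫ x, |f x| ∂μ ≤ ∫ _, (1:ℝ) ∂μ :=
      integral_mono hfint.abs (integrable_const 1) (fun x => hf x)
    simp only [integral_const, measure_univ, ENNReal.toReal_one, probReal_univ, smul_eq_mul, one_mul] at h2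
    linarith
  set Y : Fin n → Ω → ℝ := fun j ω => f (X j ω) - m with hY
  have hYmeas : ∀ j, Measurable (Y j) := fun j => ((hfm.comp (hXmeas j)).sub_const m)
  have hYindep : iIndepFun Y P :=
    hindep.comp (fun _ x => f x - m) (fun _ => hfm.sub_const m)
  have hYmgf : ∀ j, mgf (Y j) P ε ≤ Real.exp (ε^2/2) := by
    intro j
    have hmean : ∫ ω, f (X j ω) ∂P = m := by
      rw [hmdef, ← hident j, integral_map (hXmeas j).aemeasurable hfm.aestronglyMeasurable]
    have := aux_mgf_bounded P (fun ω => f (X j ω)) (hfm.comp (hXmeas j)) (fun ω => hf _) ε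
    rw [hmean] at this
    exact this
  have hYbdd : ∀ j ω, |Y j ω| ≤ 2 := fun j ω => by
    simp only [hY]
    rw [abs_sub_le_iff]
    constructor <;> cases abs_le.mp (hf (X j ω)) <;> cases abs_le.mp hm1 <;> linarith
  have hSmeas : Measurable (∑ j, Y j) := by
    rw [show (∑ j, Y j) = fun ω => ∑ j, Y j ω from funext fun ω => by simp [Finset.sum_apply]]
    exact Finset.measurable_sum _ (fun j _ => hYmeas j)
  have hSint : Integrable (fun ω => Real.exp (ε * (∑ j, Y j) ω)) P := by
    refine ⟨((hSmeas.const_mul ε).exp).aestronglyMeasurable,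
      HasFiniteIntegral.of_bounded (C := Real.exp (ε * (2 * n)))
        (Filter.Eventually.of_forall fun ω => ?_)⟩
    rw [Real.norm_eq_abs, abs_of_pos (Real.exp_pos _)]
    apply Real.exp_le_exp.mpr
    apply mul_le_mul_of_nonneg_left _ hε
    calc (∑ j, Y j) ω = ∑ j, Y j ω := by simp [Finset.sum_apply]
      _ ≤ ∑ _j : Fin n, (2:ℝ) := Finset.sum_le_sum (fun j _ => (abs_le.mp (hYbdd j ω)).2)
      _ = 2 * n := by simp [mul_comm]
  have hchern := measure_ge_le_exp_mul_mgf (X := ∑ j, Y j) (μ := P) ((n : ℝ) * ε) hε hSint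
  have hmgfS : mgf (∑ j, Y j) P ε ≤ Real.exp ((n : ℝ) * (ε^2/2)) := by
    rw [hYindep.mgf_sum hYmeas]
    calc ∏ j, mgf (Y j) P ε ≤ ∏ _j : Fin n, Real.exp (ε^2/2) :=
        Finset.prod_le_prod (fun j _ => mgf_nonneg) (fun j _ => hYmgf j)
      _ = Real.exp (ε^2/2) ^ n := by simp
      _ = Real.exp ((n : ℝ) * (ε^2/2)) := (Real.exp_nat_mul _ n).symm
  have hset : {ω | (n : ℝ) * ε ≤ ∑ j, (f (X j ω) - m)}
      = {ω | (n : ℝ) * ε ≤ (∑ j, Y j) ω} := by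
    ext ω; simp [hY, Finset.sum_apply]
  rw [hset]
  calc (P {ω | (n : ℝ) * ε ≤ (∑ j, Y j) ω}).toReal
      ≤ Real.exp (-ε * ((n:ℝ) * ε)) * mgf (∑ j, Y j) P ε := hchern
    _ ≤ Real.exp (-ε * ((n:ℝ) * ε)) * Real.exp ((n : ℝ) * (ε^2/2)) :=
        mul_le_mul_of_nonneg_left hmgfS (Real.exp_pos _).le
    _ = Real.exp (-(n : ℝ) * ε^2 / 2) := by rw [← Real.exp_add]; ring_nf

end Aux


/-- Hoeffding-type bound with a `u`-dependent threshold. -/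
theorem empCF_deviation_bound_weighted
    (P : Measure Ω) [IsProbabilityMeasure P]
    {d n : ℕ} (hd : 1 ≤ d) (hn : 1 ≤ n)
    (X : Fin n → Ω → (Fin d → ℝ)) (hXmeas : ∀ j, Measurable (X j))
    (hindep : ProbabilityTheory.iIndepFun X P)
    (μ : Measure (Fin d → ℝ)) (hident : ∀ j, Measure.map (X j) P = μ)
    (h : (Fin d → ℝ) → ℝ) (hh : ∀ v, 0 ≤ h v)
    (u : Fin d → ℝ) (hu : 1 ≤ (n : ℝ) * h u)
    (κ : ℝ) (hκ : 0 < κ) :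
    (P {ω | κ * Real.sqrt (Real.log ((n : ℝ) * h u) / n)
        ≤ ‖empCF X ω u - charFun μ u‖}).toReal
      ≤ 4 * ((n : ℝ) * h u) ^ (-(κ ^ 2) / 4 : ℝ) := by
  classical
  have hn0 : (0:ℝ) < n := by exact_mod_cast hn
  set j0 : Fin n := ⟨0, hn⟩ with hj0
  haveI hμprob : IsProbabilityMeasure μ := by
    rw [← hident j0]; exact Measure.isProbabilityMeasure_map (hXmeas j0).aemeasurable
  have hdot : Measurable (fun x : Fin d → ℝ => dot u x) :=
    Finset.measurable_sum (f := fun i (x : Fin d → ℝ) => u i * x i) _ (fun i _ => by fun_prop)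
  set L := Real.log ((n:ℝ) * h u) with hLdef
  have hL0 : 0 ≤ L := Real.log_nonneg hu
  set τ := κ * Real.sqrt (L / n) with hτdef
  have hτ0 : 0 ≤ τ := mul_nonneg hκ.le (Real.sqrt_nonneg _)
  set ε := τ / Real.sqrt 2 with hεdef
  have hε0 : 0 ≤ ε := div_nonneg hτ0 (Real.sqrt_nonneg 2)
  -- four directions
  set f1 : (Fin d → ℝ) → ℝ := fun x => Real.cos (dot u x) with hf1def
  set f2 : (Fin d → ℝ) → ℝ := fun x => -Real.cos (dot u x) with hf2def
  set f3 : (Fin d → ℝ) → ℝ := fun x => Real.sin (dot u x) with hf3def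
  set f4 : (Fin d → ℝ) → ℝ := fun x => -Real.sin (dot u x) with hf4def
  have hf1m : Measurable f1 := Real.measurable_cos.comp hdot
  have hf3m : Measurable f3 := Real.measurable_sin.comp hdot
  have hf2m : Measurable f2 := hf1m.neg
  have hf4m : Measurable f4 := hf3m.neg
  have hb1 : ∀ x, |f1 x| ≤ 1 := fun x => Real.abs_cos_le_one _
  have hb3 : ∀ x, |f3 x| ≤ 1 := fun x => Real.abs_sin_le_one _
  have hb2 : ∀ x, |f2 x| ≤ 1 := fun x => by rw [hf2def]; simpa using Real.abs_cos_le_one _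
  have hb4 : ∀ x, |f4 x| ≤ 1 := fun x => by rw [hf4def]; simpa using Real.abs_sin_le_one _
  -- real and imaginary parts
  have hexp_re : ∀ r : ℝ, (Complex.exp (Complex.I * (r:ℂ))).re = Real.cos r := by
    intro r; rw [mul_comm]; exact Complex.exp_ofReal_mul_I_re r
  have hexp_im : ∀ r : ℝ, (Complex.exp (Complex.I * (r:ℂ))).im = Real.sin r := by
    intro r; rw [mul_comm]; exact Complex.exp_ofReal_mul_I_im r
  have hcint : Integrable (fun x => Complex.exp (Complex.I * (dot u x : ℂ))) μ := by
    refine ⟨(Complex.measurable_exp.comp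
        (measurable_const.mul (Complex.measurable_ofReal.comp hdot))).aestronglyMeasurable,
      HasFiniteIntegral.of_bounded (C := 1) (Filter.Eventually.of_forall fun x => ?_)⟩
    rw [mul_comm]
    exact le_of_eq (Complex.norm_exp_ofReal_mul_I _)
  have hchar_re : (charFun μ u).re = ∫ x, f1 x ∂μ := by
    rw [charFun]
    have := integral_re (𝕜 := ℂ) hcint
    simp only [RCLike.re_to_complex] at this
    rw [← this]
    congr 1 with x
    exact (hexp_re (dot u x)).symm ▸ rfl
  have hchar_im : (charFun μ u).im = ∫ x, f3 x ∂μ := by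
    rw [charFun]
    have := integral_im (𝕜 := ℂ) hcint
    simp only [RCLike.im_to_complex] at this
    rw [← this]
    simp only [hexp_im, hf3def]
  have hemp_re : ∀ ω, (empCF X ω u).re = (n:ℝ)⁻¹ * ∑ j, f1 (X j ω) := by
    intro ω
    rw [empCF, show ((n:ℂ))⁻¹ = (((n:ℝ)⁻¹ : ℝ) : ℂ) by push_cast; ring,
      Complex.re_ofReal_mul, Complex.re_sum]
    simp only [hexp_re, hf1def]
  have hemp_im : ∀ ω, (empCF X ω u).im = (n:ℝ)⁻¹ * ∑ j, f3 (X j ω) := by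
    intro ω
    rw [empCF, show ((n:ℂ))⁻¹ = (((n:ℝ)⁻¹ : ℝ) : ℂ) by push_cast; ring,
      Complex.im_ofReal_mul, Complex.im_sum]
    simp only [hexp_im, hf3def]
  -- centered sum expressions
  have hzre : ∀ ω, (empCF X ω u - charFun μ u).re
      = (n:ℝ)⁻¹ * ∑ j, (f1 (X j ω) - ∫ x, f1 x ∂μ) := by
    intro ω
    rw [Complex.sub_re, hemp_re ω, hchar_re, Finset.sum_sub_distrib, Finset.sum_const,
      Finset.card_univ, Fintype.card_fin, nsmul_eq_mul, mul_sub]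
    rw [show (n:ℝ)⁻¹ * ((n:ℝ) * ∫ x, f1 x ∂μ) = ∫ x, f1 x ∂μ by
      field_simp]
  have hzim : ∀ ω, (empCF X ω u - charFun μ u).im
      = (n:ℝ)⁻¹ * ∑ j, (f3 (X j ω) - ∫ x, f3 x ∂μ) := by
    intro ω
    rw [Complex.sub_im, hemp_im ω, hchar_im, Finset.sum_sub_distrib, Finset.sum_const,
      Finset.card_univ, Fintype.card_fin, nsmul_eq_mul, mul_sub]
    rw [show (n:ℝ)⁻¹ * ((n:ℝ) * ∫ x, f3 x ∂μ) = ∫ x, f3 x ∂μ by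
      field_simp]
  have hneg2 : ∀ ω, ∑ j, (f2 (X j ω) - ∫ x, f2 x ∂μ)
      = -∑ j, (f1 (X j ω) - ∫ x, f1 x ∂μ) := by
    intro ω
    rw [← Finset.sum_neg_distrib]
    refine Finset.sum_congr rfl fun j _ => ?_
    rw [hf2def]
    simp only [integral_neg]
    rw [hf1def]; ring
  have hneg4 : ∀ ω, ∑ j, (f4 (X j ω) - ∫ x, f4 x ∂μ)
      = -∑ j, (f3 (X j ω) - ∫ x, f3 x ∂μ) := by
    intro ω
    rw [← Finset.sum_neg_distrib]
    refine Finset.sum_congr rfl fun j _ => ?_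
    rw [hf4def]
    simp only [integral_neg]
    rw [hf3def]; ring
  -- events
  set A1 := {ω | (n : ℝ) * ε ≤ ∑ j, (f1 (X j ω) - ∫ x, f1 x ∂μ)} with hA1
  set A2 := {ω | (n : ℝ) * ε ≤ ∑ j, (f2 (X j ω) - ∫ x, f2 x ∂μ)} with hA2
  set A3 := {ω | (n : ℝ) * ε ≤ ∑ j, (f3 (X j ω) - ∫ x, f3 x ∂μ)} with hA3
  set A4 := {ω | (n : ℝ) * ε ≤ ∑ j, (f4 (X j ω) - ∫ x, f4 x ∂μ)} with hA4
  have hsub : {ω | τ ≤ ‖empCF X ω u - charFun μ u‖}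
      ⊆ (A1 ∪ A2) ∪ (A3 ∪ A4) := by
    intro ω hω
    simp only [Set.mem_setOf_eq] at hω
    set z := empCF X ω u - charFun μ u with hz
    have hsq2 : Real.sqrt 2 ^ 2 = 2 := Real.sq_sqrt (by norm_num)
    have hττ : τ ^ 2 = 2 * ε ^ 2 := by
      rw [hεdef, div_pow, hsq2]; ring
    have hzabs : z.re ^ 2 + z.im ^ 2 = ‖z‖ ^ 2 := by
      rw [Complex.sq_norm, Complex.normSq_apply]; ring
    have hkey : ε ≤ |z.re| ∨ ε ≤ |z.im| := by
      by_contra hcon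
      push_neg at hcon
      have h1 : τ ^ 2 ≤ ‖z‖ ^ 2 := by
        have := pow_le_pow_left₀ hτ0 hω 2
        simpa using this
      nlinarith [sq_abs z.re, sq_abs z.im, hcon.1, hcon.2, abs_nonneg z.re, abs_nonneg z.im]
    have hmul : ∀ S : ℝ, ε ≤ (n:ℝ)⁻¹ * S → (n:ℝ) * ε ≤ S := by
      intro S hS
      have := mul_le_mul_of_nonneg_left hS hn0.le
      rwa [← mul_assoc, mul_inv_cancel₀ hn0.ne', one_mul] at this
    rcases hkey with hk | hk
    · rcases le_abs.mp hk with hk' | hk'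
      · exact Set.mem_union_left _ (Set.mem_union_left _ (hmul _ (by rw [← hzre ω]; exact hk')))
      · refine Set.mem_union_left _ (Set.mem_union_right _ ?_)
        have : ε ≤ (n:ℝ)⁻¹ * ∑ j, (f2 (X j ω) - ∫ x, f2 x ∂μ) := by
          rw [hneg2 ω, mul_neg, ← hzre ω]; exact hk'
        exact hmul _ this
    · rcases le_abs.mp hk with hk' | hk'
      · exact Set.mem_union_right _ (Set.mem_union_left _ (hmul _ (by rw [← hzim ω]; exact hk')))
      · refine Set.mem_union_right _ (Set.mem_union_right _ ?_)
        have : ε ≤ (n:ℝ)⁻¹ * ∑ j, (f4 (X j ω) - ∫ x, f4 x ∂μ) := by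
          rw [hneg4 ω, mul_neg, ← hzim ω]; exact hk'
        exact hmul _ this
  have h1 := aux_sum_tail P X hXmeas hindep μ hident f1 hf1m hb1 ε hε0
  have h2 := aux_sum_tail P X hXmeas hindep μ hident f2 hf2m hb2 ε hε0
  have h3 := aux_sum_tail P X hXmeas hindep μ hident f3 hf3m hb3 ε hε0
  have h4 := aux_sum_tail P X hXmeas hindep μ hident f4 hf4m hb4 ε hε0
  have hexp_eq : Real.exp (-(n:ℝ) * ε ^ 2 / 2) = ((n : ℝ) * h u) ^ (-(κ ^ 2) / 4 : ℝ) := by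
    rw [Real.rpow_def_of_pos (lt_of_lt_of_le one_pos hu)]
    congr 1
    have hsq : ε ^ 2 = κ ^ 2 * (L / n) / 2 := by
      rw [hεdef, hτdef, div_pow, mul_pow, Real.sq_sqrt (div_nonneg hL0 hn0.le),
        Real.sq_sqrt (by norm_num : (0:ℝ) ≤ 2)]
    rw [hsq]
    field_simp
    ring
  have hPle : P {ω | τ ≤ ‖empCF X ω u - charFun μ u‖}
      ≤ (P A1 + P A2) + (P A3 + P A4) :=
    (measure_mono hsub).trans ((measure_union_le _ _).trans
      (add_le_add (measure_union_le _ _) (measure_union_le _ _)))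
  have hne : ∀ B : Set Ω, P B ≠ ⊤ := fun B => measure_ne_top P B
  have htR := ENNReal.toReal_mono (by
    refine ENNReal.add_ne_top.mpr ⟨?_, ?_⟩ <;>
      exact ENNReal.add_ne_top.mpr ⟨hne _, hne _⟩) hPle
  rw [ENNReal.toReal_add (ENNReal.add_ne_top.mpr ⟨hne _, hne _⟩)
      (ENNReal.add_ne_top.mpr ⟨hne _, hne _⟩),
    ENNReal.toReal_add (hne _) (hne _), ENNReal.toReal_add (hne _) (hne _)] at htR
  rw [← hexp_eq]
  linarith

end ADE
end
end

section
/- Let d ≥ 1, n ≥ 2 and let X_1,…,X_n be i.i.d. ℝ^d-valued random variables with common characteristic function φ_X. Then for every m = (m_1,…,m_d) ∈ (0,n]^d, every κ > 0 and every A ∈ 𝓐, (2π)^{-d} ∫_{A([-m,m])} E[ |φ̃_{X,n}(u) − φ_X(u)|² ] du ≤ (5 + (1 + (κ+2)√(log n))²) |det(A)| m_1⋯m_d / (π^d n), where [-m,m] = [-m_1,m_1]×⋯×[-m_d,m_d]. -/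
open MeasureTheory Real Filter
open scoped BigOperators ENNReal

noncomputable section

namespace ADE

variable {Ω : Type*} [MeasurableSpace Ω] {E : Type*} [MeasurableSpace E]

/-! ### Auxiliary lemmas -/

lemma meas_expdot {d : ℕ} (u : Fin d → ℝ) :
    Measurable fun x : Fin d → ℝ => Complex.exp (Complex.I * (dot u x : ℂ)) := by
  have h : Continuous fun x : Fin d → ℝ => dot u x := by
    unfold dot
    exact continuous_finset_sum _ fun i _ => continuous_const.mul (continuous_apply i)
  exact Complex.measurable_exp.comp
    (measurable_const.mul (Complex.measurable_ofReal.comp h.measurable))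

lemma abs_expdot {d : ℕ} (u x : Fin d → ℝ) :
    ‖Complex.exp (Complex.I * (dot u x : ℂ))‖ = 1 := by
  rw [Complex.norm_exp]; simp

lemma integrable_of_bdd {F : Type*} [NormedAddCommGroup F] {P : Measure Ω} [IsFiniteMeasure P]
    {f : Ω → F} (hf : AEStronglyMeasurable f P) (C : ℝ) (h : ∀ ω, ‖f ω‖ ≤ C) :
    Integrable f P :=
  memLp_one_iff_integrable.1 (MemLp.of_bound hf C (Eventually.of_forall h))

lemma abs_charFun_le {d : ℕ} (μ : Measure (Fin d → ℝ)) [IsProbabilityMeasure μ]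
    (u : Fin d → ℝ) : ‖charFun μ u‖ ≤ 1 := by
  have := norm_integral_le_integral_norm (μ := μ)
    (f := fun x => Complex.exp (Complex.I * (dot u x : ℂ)))
  simpa [charFun, abs_expdot] using this

lemma L2_bound (P : Measure Ω) [IsProbabilityMeasure P]
    {d n : ℕ} (hn : 2 ≤ n) (X : Fin n → Ω → (Fin d → ℝ)) (hXmeas : ∀ j, Measurable (X j))
    (hindep : ProbabilityTheory.iIndepFun X P)
    (μ : Measure (Fin d → ℝ)) (hident : ∀ j, Measure.map (X j) P = μ) (u : Fin d → ℝ) :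
    ∫ ω, ‖empCF X ω u - charFun μ u‖ ^ 2 ∂P ≤ 1 / n := by
  have hnn : 0 < n := by omega
  have hn0 : (0:ℝ) < n := by exact_mod_cast hnn
  have hnC : (n:ℂ) ≠ 0 := by exact_mod_cast hnn.ne'
  set φ := charFun μ u with hφ
  set Z : Fin n → Ω → ℂ := fun j ω => Complex.exp (Complex.I * (dot u (X j ω) : ℂ)) with hZ
  have hZmeas : ∀ j, Measurable (Z j) := fun j => (meas_expdot u).comp (hXmeas j)
  have hZabs : ∀ j ω, ‖Z j ω‖ = 1 := fun j ω => abs_expdot u (X j ω)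
  have hZint : ∀ j, Integrable (Z j) P := fun j =>
    integrable_of_bdd (hZmeas j).aestronglyMeasurable 1
      (fun ω => le_of_eq (by simpa using hZabs j ω))
  have hEZ : ∀ j, ∫ ω, Z j ω ∂P = φ := by
    intro j
    rw [hφ, charFun, ← hident j,
      integral_map (hXmeas j).aemeasurable (meas_expdot u).aestronglyMeasurable]
  set Y : Fin n → Ω → ℂ := fun j ω => Z j ω - φ with hY
  have hYmeas : ∀ j, Measurable (Y j) := fun j => (hZmeas j).sub measurable_const
  have hYint : ∀ j, Integrable (Y j) P := fun j => (hZint j).sub (integrable_const φ)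
  have hEY : ∀ j, ∫ ω, Y j ω ∂P = 0 := by
    intro j
    rw [hY]
    rw [integral_sub (hZint j) (integrable_const φ), hEZ j, integral_const]
    simp
  set B : ℝ := 1 + ‖φ‖ with hB
  have hB0 : 0 ≤ B := by positivity
  have hYbd : ∀ j ω, ‖Y j ω‖ ≤ B := by
    intro j ω
    calc ‖Y j ω‖ ≤ ‖Z j ω‖ + ‖φ‖ := by
          simpa using norm_sub_le (Z j ω) φ
    _ = B := by rw [hZabs]
  have hBre : ∀ j ω, |(Y j ω).re| ≤ B := fun j ω =>
    (Complex.abs_re_le_norm _).trans (hYbd j ω)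
  have hBim : ∀ j ω, |(Y j ω).im| ≤ B := fun j ω =>
    (Complex.abs_im_le_norm _).trans (hYbd j ω)
  have hremeas : ∀ j, Measurable fun ω => (Y j ω).re :=
    fun j => Complex.measurable_re.comp (hYmeas j)
  have himmeas : ∀ j, Measurable fun ω => (Y j ω).im :=
    fun j => Complex.measurable_im.comp (hYmeas j)
  have hEYre : ∀ j, ∫ ω, (Y j ω).re ∂P = 0 := by
    intro j
    have h := integral_re (hYint j)
    rw [hEY j] at h
    simpa using h
  have hEYim : ∀ j, ∫ ω, (Y j ω).im ∂P = 0 := by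
    intro j
    have h := integral_im (hYint j)
    rw [hEY j] at h
    simpa using h
  have hmulre : ∀ j k, Integrable (fun ω => (Y j ω).re * (Y k ω).re) P := by
    intro j k
    refine integrable_of_bdd ((hremeas j).mul (hremeas k)).aestronglyMeasurable (B * B) ?_
    intro ω
    rw [Real.norm_eq_abs, abs_mul]
    exact mul_le_mul (hBre j ω) (hBre k ω) (abs_nonneg _) hB0
  have hmulim : ∀ j k, Integrable (fun ω => (Y j ω).im * (Y k ω).im) P := by
    intro j k
    refine integrable_of_bdd ((himmeas j).mul (himmeas k)).aestronglyMeasurable (B * B) ?_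
    intro ω
    rw [Real.norm_eq_abs, abs_mul]
    exact mul_le_mul (hBim j ω) (hBim k ω) (abs_nonneg _) hB0
  have hintterm : ∀ j k,
      Integrable (fun ω => (Y j ω).re * (Y k ω).re + (Y j ω).im * (Y k ω).im) P :=
    fun j k => (hmulre j k).add (hmulim j k)
  -- cross terms vanish by independence
  have hcross : ∀ j k, j ≠ k →
      ∫ ω, ((Y j ω).re * (Y k ω).re + (Y j ω).im * (Y k ω).im) ∂P = 0 := by
    intro j k hjk
    have hXind : ProbabilityTheory.IndepFun (X j) (X k) P := hindep.indepFun hjk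
    have hgre : Measurable fun x : Fin d → ℝ =>
        (Complex.exp (Complex.I * (dot u x : ℂ))).re - φ.re :=
      (Complex.measurable_re.comp (meas_expdot u)).sub measurable_const
    have hgim : Measurable fun x : Fin d → ℝ =>
        (Complex.exp (Complex.I * (dot u x : ℂ))).im - φ.im :=
      (Complex.measurable_im.comp (meas_expdot u)).sub measurable_const
    have hire : ProbabilityTheory.IndepFun (fun ω => (Y j ω).re) (fun ω => (Y k ω).re) P := by
      have h1 : (fun ω => (Y j ω).re) =
          (fun x : Fin d → ℝ => (Complex.exp (Complex.I * (dot u x : ℂ))).re - φ.re) ∘ X j := by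
        funext ω; simp [hY, hZ, Function.comp, Complex.sub_re]
      have h2 : (fun ω => (Y k ω).re) =
          (fun x : Fin d → ℝ => (Complex.exp (Complex.I * (dot u x : ℂ))).re - φ.re) ∘ X k := by
        funext ω; simp [hY, hZ, Function.comp, Complex.sub_re]
      rw [h1, h2]
      exact hXind.comp hgre hgre
    have hiim : ProbabilityTheory.IndepFun (fun ω => (Y j ω).im) (fun ω => (Y k ω).im) P := by
      have h1 : (fun ω => (Y j ω).im) =
          (fun x : Fin d → ℝ => (Complex.exp (Complex.I * (dot u x : ℂ))).im - φ.im) ∘ X j := by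
        funext ω; simp [hY, hZ, Function.comp, Complex.sub_im]
      have h2 : (fun ω => (Y k ω).im) =
          (fun x : Fin d → ℝ => (Complex.exp (Complex.I * (dot u x : ℂ))).im - φ.im) ∘ X k := by
        funext ω; simp [hY, hZ, Function.comp, Complex.sub_im]
      rw [h1, h2]
      exact hXind.comp hgim hgim
    have e1 := hire.integral_mul_eq_mul_integral
      (integrable_of_bdd (hremeas j).aestronglyMeasurable B
        (fun ω => by simpa [Real.norm_eq_abs] using hBre j ω)).1
      (integrable_of_bdd (hremeas k).aestronglyMeasurable B
        (fun ω => by simpa [Real.norm_eq_abs] using hBre k ω)).1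
    have e2 := hiim.integral_mul_eq_mul_integral
      (integrable_of_bdd (himmeas j).aestronglyMeasurable B
        (fun ω => by simpa [Real.norm_eq_abs] using hBim j ω)).1
      (integrable_of_bdd (himmeas k).aestronglyMeasurable B
        (fun ω => by simpa [Real.norm_eq_abs] using hBim k ω)).1
    have e1' : ∫ ω, (Y j ω).re * (Y k ω).re ∂P
        = (∫ ω, (Y j ω).re ∂P) * ∫ ω, (Y k ω).re ∂P := e1
    have e2' : ∫ ω, (Y j ω).im * (Y k ω).im ∂P
        = (∫ ω, (Y j ω).im ∂P) * ∫ ω, (Y k ω).im ∂P := e2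
    rw [integral_add (hmulre j k) (hmulim j k), e1', e2', hEYre, hEYre, hEYim, hEYim]
    ring
  -- diagonal terms are at most 1
  have hZre : ∀ j, ∫ ω, (Z j ω).re ∂P = φ.re := by
    intro j
    have h := integral_re (hZint j)
    rw [hEZ j] at h
    exact h
  have hZim : ∀ j, ∫ ω, (Z j ω).im ∂P = φ.im := by
    intro j
    have h := integral_im (hZint j)
    rw [hEZ j] at h
    exact h
  have hdiag : ∀ j, ∫ ω, ((Y j ω).re * (Y j ω).re + (Y j ω).im * (Y j ω).im) ∂P ≤ 1 := by
    intro j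
    have hptwise : ∀ ω, (Y j ω).re * (Y j ω).re + (Y j ω).im * (Y j ω).im
        = 1 - 2 * ((Z j ω).re * φ.re + (Z j ω).im * φ.im) + (φ.re ^ 2 + φ.im ^ 2) := by
      intro ω
      have h1 : (Z j ω).re ^ 2 + (Z j ω).im ^ 2 = 1 := by
        have h2 : Complex.normSq (Z j ω) = 1 := by
          rw [Complex.normSq_eq_norm_sq, hZabs]; norm_num
        simpa [Complex.normSq_apply, sq] using h2
      simp only [hY, Complex.sub_re, Complex.sub_im]
      linear_combination h1
    rw [integral_congr_ae (Eventually.of_forall hptwise)]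
    have hZreint : ∀ i : Fin n, Integrable (fun ω => (Z i ω).re) P := fun i =>
      integrable_of_bdd (Complex.measurable_re.comp (hZmeas i)).aestronglyMeasurable 1
        (fun ω => by
          simpa [Real.norm_eq_abs] using (Complex.abs_re_le_norm (Z i ω)).trans (hZabs i ω).le)
    have hZimint : ∀ i : Fin n, Integrable (fun ω => (Z i ω).im) P := fun i =>
      integrable_of_bdd (Complex.measurable_im.comp (hZmeas i)).aestronglyMeasurable 1
        (fun ω => by
          simpa [Real.norm_eq_abs] using (Complex.abs_im_le_norm (Z i ω)).trans (hZabs i ω).le)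
    have i2 : Integrable (fun ω => (Z j ω).re * φ.re + (Z j ω).im * φ.im) P :=
      ((hZreint j).mul_const φ.re).add ((hZimint j).mul_const φ.im)
    have i3 : Integrable (fun ω => 1 - 2 * ((Z j ω).re * φ.re + (Z j ω).im * φ.im)) P :=
      (integrable_const 1).sub (i2.const_mul 2)
    have i4 : Integrable (fun ω => 2 * ((Z j ω).re * φ.re + (Z j ω).im * φ.im)) P :=
      i2.const_mul 2
    have i5 : Integrable (fun ω => (Z j ω).re * φ.re) P := (hZreint j).mul_const φ.re
    have i6 : Integrable (fun ω => (Z j ω).im * φ.im) P := (hZimint j).mul_const φ.im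
    rw [integral_add i3 (integrable_const _),
      integral_sub (integrable_const (1:ℝ)) i4, integral_const_mul,
      integral_add i5 i6,
      integral_mul_const, integral_mul_const, hZre, hZim, integral_const, integral_const]
    simp only [measure_univ, probReal_univ, ENNReal.toReal_one, smul_eq_mul, one_mul]
    nlinarith [sq_nonneg φ.re, sq_nonneg φ.im]
  -- sum it all up
  have key : ∫ ω, Complex.normSq (∑ j, Y j ω) ∂P ≤ n := by
    have hexp : ∀ ω, Complex.normSq (∑ j, Y j ω)
        = ∑ j, ∑ k, ((Y j ω).re * (Y k ω).re + (Y j ω).im * (Y k ω).im) := by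
      intro ω
      rw [Complex.normSq_apply, Complex.re_sum, Complex.im_sum, Finset.sum_mul_sum,
        Finset.sum_mul_sum, ← Finset.sum_add_distrib]
      exact Finset.sum_congr rfl fun j _ => (Finset.sum_add_distrib).symm
    rw [integral_congr_ae (Eventually.of_forall hexp)]
    rw [integral_finset_sum _ (fun j _ => integrable_finset_sum _ (fun k _ => hintterm j k))]
    calc ∑ j : Fin n, ∫ ω, (∑ k, ((Y j ω).re * (Y k ω).re + (Y j ω).im * (Y k ω).im)) ∂P
        ≤ ∑ _j : Fin n, (1:ℝ) := by
          refine Finset.sum_le_sum fun j _ => ?_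
          rw [integral_finset_sum _ (fun k _ => hintterm j k)]
          rw [Finset.sum_eq_single j (fun k _ hkj => hcross j k (Ne.symm hkj))
            (fun h => absurd (Finset.mem_univ j) h)]
          exact hdiag j
    _ = n := by simp
  -- relate |empCF - φ|² to normSq of the sum
  have hrel : ∀ ω, ‖empCF X ω u - φ‖ ^ 2
      = ((n:ℝ) * n)⁻¹ * Complex.normSq (∑ j, Y j ω) := by
    intro ω
    have hsum : empCF X ω u - φ = (n:ℂ)⁻¹ * ∑ j, Y j ω := by
      have h1 : ∑ j : Fin n, Y j ω = (∑ j, Z j ω) - n * φ := by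
        rw [hY, Finset.sum_sub_distrib]
        congr 1
        rw [Finset.sum_const, Finset.card_univ, Fintype.card_fin, nsmul_eq_mul]
      rw [h1, mul_sub, empCF]
      have : (n:ℂ)⁻¹ * ((n:ℂ) * φ) = φ := by field_simp
      rw [this]
    rw [hsum, Complex.sq_norm, map_mul Complex.normSq, map_inv₀, Complex.normSq_natCast]
  rw [integral_congr_ae (Eventually.of_forall hrel), integral_const_mul]
  calc ((n:ℝ) * n)⁻¹ * ∫ ω, Complex.normSq (∑ j, Y j ω) ∂P
      ≤ ((n:ℝ) * n)⁻¹ * n := by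
        exact mul_le_mul_of_nonneg_left key (by positivity)
  _ = 1 / n := by field_simp

lemma inner_bound (P : Measure Ω) [IsProbabilityMeasure P]
    {d n : ℕ} (hn : 2 ≤ n) (X : Fin n → Ω → (Fin d → ℝ)) (hXmeas : ∀ j, Measurable (X j))
    (hindep : ProbabilityTheory.iIndepFun X P)
    (μ : Measure (Fin d → ℝ)) (hident : ∀ j, Measure.map (X j) P = μ)
    (κ : ℝ) (hκ : 0 < κ) (u : Fin d → ℝ) :
    ∫ ω, ‖threshCF κ X ω u - charFun μ u‖ ^ 2 ∂P
      ≤ (1 + (2 + κ * Real.sqrt (Real.log n)) ^ 2) / n := by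
  have hnn : 0 < n := by omega
  have hn0 : (0:ℝ) < n := by exact_mod_cast hnn
  have hμ : IsProbabilityMeasure μ := by
    rw [← hident ⟨0, by omega⟩]
    exact Measure.isProbabilityMeasure_map (hXmeas _).aemeasurable
  set φ := charFun μ u with hφ
  have habsφ : ‖φ‖ ≤ 1 := abs_charFun_le μ u
  set L := Real.sqrt (Real.log n) with hL
  have hL0 : 0 ≤ L := Real.sqrt_nonneg _
  set c : ℝ := (1 + κ * L) / Real.sqrt n with hc
  have hc0 : 0 ≤ c := by positivity
  set S : Ω → ℂ := fun ω => empCF X ω u with hS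
  have hSmeas : Measurable S := by
    apply Measurable.const_mul
    exact Finset.measurable_sum _ fun j _ => (meas_expdot u).comp (hXmeas j)
  have hSabs : ∀ ω, ‖S ω‖ ≤ 1 := by
    intro ω
    rw [hS]
    simp only [empCF]
    rw [norm_mul, norm_inv, Complex.norm_natCast]
    calc (n:ℝ)⁻¹ * ‖∑ j, Complex.exp (Complex.I * (dot u (X j ω) : ℂ))‖
        ≤ (n:ℝ)⁻¹ * ∑ j : Fin n, 1 := by
          refine mul_le_mul_of_nonneg_left ?_ (by positivity)
          refine (norm_sum_le _ _).trans ?_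
          exact Finset.sum_le_sum fun j _ => (abs_expdot u (X j ω)).le
    _ = 1 := by
        rw [Finset.sum_const, Finset.card_univ, Fintype.card_fin, nsmul_eq_mul, mul_one]
        field_simp
  set D : Ω → ℝ := fun ω => ‖S ω - φ‖ with hD
  have hDnn : ∀ ω, 0 ≤ D ω := fun ω => norm_nonneg _
  have hDmeas : Measurable D := by
    have : D = fun ω => ‖S ω - φ‖ := by funext ω; rw [hD]
    rw [this]
    exact (hSmeas.sub measurable_const).norm
  have hDbd : ∀ ω, D ω ≤ 2 := by
    intro ω
    calc D ω ≤ ‖S ω‖ + ‖φ‖ := by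
          simpa [hD] using norm_sub_le (S ω) φ
    _ ≤ 2 := by linarith [hSabs ω]
  have hD2 : ∫ ω, D ω ^ 2 ∂P ≤ 1 / n := L2_bound P hn X hXmeas hindep μ hident u
  have hD2int : Integrable (fun ω => D ω ^ 2) P :=
    integrable_of_bdd ((hDmeas.pow_const 2)).aestronglyMeasurable 4
      (fun ω => by
        rw [Real.norm_eq_abs, abs_of_nonneg (by positivity)]
        nlinarith [hDbd ω, hDnn ω])
  have hDint : Integrable D P :=
    integrable_of_bdd hDmeas.aestronglyMeasurable 2
      (fun ω => by rw [Real.norm_eq_abs, abs_of_nonneg (hDnn ω)]; exact hDbd ω)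
  -- E D ≤ sqrt(1/n)
  have hED : ∫ ω, D ω ∂P ≤ Real.sqrt (1 / n) := by
    have hmem : MemLp D 2 P :=
      MemLp.of_bound hDmeas.aestronglyMeasurable 2
        (Eventually.of_forall fun ω => by
          rw [Real.norm_eq_abs, abs_of_nonneg (hDnn ω)]; exact hDbd ω)
    have hvar := ProbabilityTheory.variance_nonneg D P
    rw [ProbabilityTheory.variance_eq_sub hmem] at hvar
    have h1 : (∫ ω, D ω ∂P) ^ 2 ≤ ∫ ω, D ω ^ 2 ∂P := by
      have : ∫ ω, (D ^ 2) ω ∂P = ∫ ω, D ω ^ 2 ∂P := by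
        apply integral_congr_ae; filter_upwards with ω; simp
      linarith [hvar, this ▸ hvar]
    have h2 : (∫ ω, D ω ∂P) ^ 2 ≤ 1 / n := h1.trans hD2
    have h3 : 0 ≤ ∫ ω, D ω ∂P := integral_nonneg hDnn
    calc ∫ ω, D ω ∂P = Real.sqrt ((∫ ω, D ω ∂P) ^ 2) := by rw [Real.sqrt_sq h3]
    _ ≤ Real.sqrt (1 / n) := Real.sqrt_le_sqrt h2
  -- pointwise bound
  have hpt : ∀ ω, ‖threshCF κ X ω u - φ‖ ^ 2 ≤ D ω ^ 2 + (c + D ω) ^ 2 := by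
    intro ω
    simp only [threshCF]
    split_ifs with h
    · have : ‖empCF X ω u - φ‖ = D ω := rfl
      rw [this]
      nlinarith [sq_nonneg (c + D ω)]
    · rw [zero_sub, norm_neg]
      have h1 : ‖S ω‖ < c := by
        rw [hS]; exact lt_of_not_ge h
      have h2 : ‖φ‖ ≤ ‖S ω‖ + D ω := by
        calc ‖φ‖ = ‖S ω - (S ω - φ)‖ := by ring_nf
        _ ≤ ‖S ω‖ + ‖S ω - φ‖ := norm_sub_le _ _
        _ = ‖S ω‖ + D ω := rfl
      have h3 : ‖φ‖ ≤ c + D ω := by linarith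
      nlinarith [norm_nonneg φ, sq_nonneg (D ω), hDnn ω, hc0]
  -- integrate the pointwise bound
  have hTmeas : Measurable fun ω => threshCF κ X ω u := by
    simp only [threshCF]
    apply Measurable.ite ?_ hSmeas measurable_const
    have habs : Measurable fun ω => ‖empCF X ω u‖ := by
      have : (fun ω => ‖empCF X ω u‖) = fun ω => ‖S ω‖ := by
        funext ω; rw [hS]
      rw [this]; exact hSmeas.norm
    exact measurableSet_le measurable_const habs
  have hint1 : Integrable (fun ω => ‖threshCF κ X ω u - φ‖ ^ 2) P := by
    refine integrable_of_bdd ?_ 4 ?_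
    · have : (fun ω => ‖threshCF κ X ω u - φ‖ ^ 2)
          = fun ω => ‖threshCF κ X ω u - φ‖ ^ 2 := by
        funext ω; rfl
      rw [this]
      exact (((hTmeas.sub measurable_const).norm).pow_const 2).aestronglyMeasurable
    · intro ω
      have hT : ‖threshCF κ X ω u‖ ≤ 1 := by
        simp only [threshCF]
        split_ifs with h
        · exact hSabs ω
        · simp
      have := norm_sub_le (threshCF κ X ω u) φ
      rw [Real.norm_eq_abs, abs_of_nonneg (by positivity)]
      nlinarith [norm_nonneg (threshCF κ X ω u - φ)]
  have hint2 : Integrable (fun ω => D ω ^ 2 + (c + D ω) ^ 2) P := by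
    refine hD2int.add ?_
    exact integrable_of_bdd (((measurable_const.add hDmeas).pow_const 2)).aestronglyMeasurable
      ((c + 2) ^ 2) (fun ω => by
        rw [Real.norm_eq_abs, abs_of_nonneg (by positivity)]
        nlinarith [hDbd ω, hDnn ω, hc0])
  calc ∫ ω, ‖threshCF κ X ω u - φ‖ ^ 2 ∂P
      ≤ ∫ ω, (D ω ^ 2 + (c + D ω) ^ 2) ∂P := integral_mono hint1 hint2 hpt
  _ = 2 * ∫ ω, D ω ^ 2 ∂P + 2 * c * ∫ ω, D ω ∂P + c ^ 2 := by
      have hre : (fun ω => D ω ^ 2 + (c + D ω) ^ 2)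
          = fun ω => 2 * D ω ^ 2 + (2 * c * D ω + c ^ 2) := by
        funext ω; ring
      have ia : Integrable (fun ω => 2 * c * D ω + c ^ 2) P :=
        (hDint.const_mul (2*c)).add (integrable_const _)
      have ib : Integrable (fun ω => 2 * c * D ω) P := hDint.const_mul (2*c)
      have ic : Integrable (fun ω => 2 * D ω ^ 2) P := hD2int.const_mul 2
      rw [hre, integral_add ic ia, integral_add ib (integrable_const _),
        integral_const_mul, integral_const_mul, integral_const]
      simp only [measure_univ, probReal_univ, ENNReal.toReal_one, smul_eq_mul, one_mul]
      ring
  _ ≤ 2 * (1 / n) + 2 * c * Real.sqrt (1 / n) + c ^ 2 := by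
      gcongr
  _ = (1 + (2 + κ * L) ^ 2) / n := by
      have hs0 : (0:ℝ) < Real.sqrt n := Real.sqrt_pos.2 hn0
      have hss : Real.sqrt (n:ℝ) * Real.sqrt n = n := Real.mul_self_sqrt hn0.le
      have h1 : Real.sqrt (1 / (n:ℝ)) = 1 / Real.sqrt n := by
        rw [one_div, one_div, Real.sqrt_inv]
      rw [h1, hc]
      field_simp
      nlinarith [hss]

/-- variance bound for the thresholded empirical characteristic function
over A([-m,m]), i.i.d. case. -/

theorem thresh_variance_bound
    (P : Measure Ω) [IsProbabilityMeasure P]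
    {d n : ℕ} (hd : 1 ≤ d) (hn : 2 ≤ n)
    (X : Fin n → Ω → (Fin d → ℝ)) (hXmeas : ∀ j, Measurable (X j))
    (hindep : ProbabilityTheory.iIndepFun X P)
    (μ : Measure (Fin d → ℝ)) (hident : ∀ j, Measure.map (X j) P = μ)
    (m : Fin d → ℝ) (hm : ∀ i, 0 < m i ∧ m i ≤ n)
    (κ : ℝ) (hκ : 0 < κ)
    (A : Matrix (Fin d) (Fin d) ℝ) (hA : memA A) :
    ((2 * π) ^ d : ℝ)⁻¹ *
      ∫ u in A.mulVec '' cube m,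
        (∫ ω, ‖threshCF κ X ω u - charFun μ u‖ ^ 2 ∂P)
      ≤ (5 + (1 + (κ + 2) * Real.sqrt (Real.log n)) ^ 2) * |A.det| * (∏ i, m i)
          / (π ^ d * n) := by
  have hnn : 0 < n := by omega
  have hn0 : (0:ℝ) < n := by exact_mod_cast hnn
  have hπ : (0:ℝ) < π := Real.pi_pos
  set L := Real.sqrt (Real.log n) with hLdef
  have hL : (1:ℝ)/2 ≤ L := by
    rw [hLdef, show (1:ℝ)/2 = Real.sqrt (1/4) by
      rw [show (1:ℝ)/4 = (1/2)^2 by norm_num, Real.sqrt_sq (by norm_num)]]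
    apply Real.sqrt_le_sqrt
    have h2 : Real.log 2 ≤ Real.log n := Real.log_le_log (by norm_num) (by exact_mod_cast hn)
    linarith [Real.log_two_gt_d9]
  have hL0 : 0 ≤ L := by linarith
  set C : ℝ := 1 + (2 + κ * L) ^ 2 with hCdef
  have hC0 : 0 ≤ C := by positivity
  have hCle : C ≤ 5 + (1 + (κ + 2) * L) ^ 2 := by
    rw [hCdef]
    nlinarith [hκ.le, hL, mul_nonneg hκ.le hL0]
  have hm0 : (0:ℝ) ≤ ∏ i, m i := Finset.prod_nonneg fun i _ => (hm i).1.le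
  set Sset := A.mulVec '' cube m with hSset
  -- volume computations
  have hcube : cube m = Set.pi Set.univ (fun i => Set.Icc (-(m i)) (m i)) := by
    ext x; simp [cube, Set.mem_pi, abs_le, Pi.le_def, forall_and]
  have hvolcube : volume (cube m) = ENNReal.ofReal (∏ i, 2 * m i) := by
    rw [hcube, volume_pi_pi]
    rw [ENNReal.ofReal_prod_of_nonneg (fun i _ => by linarith [(hm i).1])]
    refine Finset.prod_congr rfl fun i _ => ?_
    rw [Real.volume_Icc]
    congr 1
    ring
  have himg : Sset = ⇑(Matrix.toLin' A) '' cube m := by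
    have hfun : A.mulVec = ⇑(Matrix.toLin' A) := by
      funext v
      rw [Matrix.toLin'_apply]
    rw [hSset, hfun]
  have hvolS : volume Sset = ENNReal.ofReal (|A.det| * ∏ i, 2 * m i) := by
    rw [himg, Measure.addHaar_image_linearMap, LinearMap.det_toLin', hvolcube,
      ← ENNReal.ofReal_mul (abs_nonneg _)]
  have hvolS_lt : volume Sset < ⊤ := by rw [hvolS]; exact ENNReal.ofReal_lt_top
  set g : (Fin d → ℝ) → ℝ :=
    fun u => ∫ ω, ‖threshCF κ X ω u - charFun μ u‖ ^ 2 ∂P with hg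
  have hmono : ∀ u, g u ≤ C / n := fun u =>
    inner_bound P hn X hXmeas hindep μ hident κ hκ u
  have hprod : ∏ i, (2 * m i) = 2^d * ∏ i, m i := by
    rw [Finset.prod_mul_distrib, Finset.prod_const, Finset.card_univ, Fintype.card_fin]
  by_cases hint : IntegrableOn g Sset volume
  · have h1 : ∫ u in Sset, g u ≤ ∫ _u in Sset, (C / (n:ℝ)) :=
      setIntegral_mono hint (integrableOn_const hvolS_lt.ne) hmono
    have h2 : ∫ _u in Sset, (C / (n:ℝ)) = (|A.det| * ∏ i, 2 * m i) * (C / n) := by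
      rw [setIntegral_const, measureReal_def, hvolS, ENNReal.toReal_ofReal
        (mul_nonneg (abs_nonneg _) (Finset.prod_nonneg fun i _ => by linarith [(hm i).1]))]
      rw [smul_eq_mul]
    calc ((2 * π) ^ d : ℝ)⁻¹ * ∫ u in Sset, g u
        ≤ ((2 * π) ^ d : ℝ)⁻¹ * ((|A.det| * ∏ i, 2 * m i) * (C / n)) := by
          refine mul_le_mul_of_nonneg_left ?_ (by positivity)
          rw [← h2]; exact h1
    _ = C * (|A.det| * ∏ i, m i) / (π ^ d * n) := by
        rw [hprod, mul_pow]
        field_simp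
    _ ≤ (5 + (1 + (κ + 2) * L) ^ 2) * (|A.det| * ∏ i, m i) / (π ^ d * n) := by
        have h3 : C * (|A.det| * ∏ i, m i)
            ≤ (5 + (1 + (κ + 2) * L) ^ 2) * (|A.det| * ∏ i, m i) :=
          mul_le_mul_of_nonneg_right hCle (mul_nonneg (abs_nonneg _) hm0)
        exact div_le_div_of_nonneg_right h3 (by positivity)
    _ = (5 + (1 + (κ + 2) * L) ^ 2) * |A.det| * (∏ i, m i) / (π ^ d * n) := by ring
  · rw [integral_undef hint, mul_zero]
    apply div_nonneg _ (by positivity)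
    exact mul_nonneg (mul_nonneg (by positivity) (abs_nonneg _)) hm0

end ADE
end
end

section
/- Let d ≥ 1 and let n ≥ 1 be a real number. Let D_n = [-n,n]^d ∩ { u ∈ ℝ^d : |u_1⋯u_d| ≤ n } and let λ_d denote Lebesgue measure on ℝ^d. Then λ_d(D_n) = (2n)^d Γ(d, (d−1)·log n) / (d−1)!, where Γ(s,x) = ∫_x^∞ z^{s−1} e^{−z} dz is the upper incomplete Gamma function. -/
open MeasureTheory Real Filter
open scoped BigOperators ENNReal

noncomputable section

namespace ADE

variable {Ω : Type*} [MeasurableSpace Ω] {E : Type*} [MeasurableSpace E]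

open Set
open scoped Pointwise

lemma expSum_hasDerivAt (m : ℕ) (z : ℝ) :
    HasDerivAt (fun z : ℝ => ∑ k ∈ Finset.range (m + 1), z ^ k / k.factorial)
      (∑ k ∈ Finset.range m, z ^ k / k.factorial) z := by
  have h : HasDerivAt (fun z : ℝ => ∑ k ∈ Finset.range (m + 1), z ^ k / k.factorial)
      (∑ k ∈ Finset.range (m + 1), (k : ℝ) * z ^ (k - 1) / k.factorial) z := by
    apply HasDerivAt.fun_sum
    intro k _
    exact (hasDerivAt_pow k z).div_const _
  convert h using 1
  rw [Finset.sum_range_succ']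
  simp only [Nat.cast_add, Nat.cast_one, Nat.factorial_succ, Nat.add_sub_cancel]
  rw [show ((0:ℕ):ℝ) * z ^ (0-1) / (Nat.factorial 0 : ℝ) = 0 by simp]
  rw [add_zero]
  apply Finset.sum_congr rfl
  intro k _
  field_simp
  push_cast
  ring

lemma F_hasDerivAt (m : ℕ) (z : ℝ) :
    HasDerivAt (fun z : ℝ => -(m.factorial : ℝ) *
        (Real.exp (-z) * ∑ k ∈ Finset.range (m + 1), z ^ k / k.factorial))
      (z ^ m * Real.exp (-z)) z := by
  have he : HasDerivAt (fun z : ℝ => Real.exp (-z)) (-Real.exp (-z)) z := by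
    exact (hasDerivAt_neg z).exp.congr_deriv (by ring)
  have h := ((he.mul (expSum_hasDerivAt m z)).const_mul (-(m.factorial : ℝ)))
  refine h.congr_deriv ?_
  have hsplit : ∑ k ∈ Finset.range (m+1), z ^ k / (k.factorial : ℝ)
      = (∑ k ∈ Finset.range m, z ^ k / k.factorial) + z ^ m / m.factorial :=
    Finset.sum_range_succ _ m
  rw [hsplit]
  have : (m.factorial : ℝ) ≠ 0 := Nat.cast_ne_zero.2 m.factorial_ne_zero
  field_simp
  ring

lemma F_tendsto (m : ℕ) :
    Tendsto (fun z : ℝ => -(m.factorial : ℝ) *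
        (Real.exp (-z) * ∑ k ∈ Finset.range (m + 1), z ^ k / k.factorial)) atTop (nhds 0) := by
  have h : ∀ z : ℝ, -(m.factorial : ℝ) * (Real.exp (-z) * ∑ k ∈ Finset.range (m + 1), z ^ k / k.factorial)
      = ∑ k ∈ Finset.range (m + 1), (-(m.factorial : ℝ) / k.factorial) * (z ^ k * Real.exp (-z)) := by
    intro z
    rw [Finset.mul_sum, Finset.mul_sum]
    apply Finset.sum_congr rfl
    intro k _
    ring
  simp only [h]
  have : Tendsto (fun z : ℝ => ∑ k ∈ Finset.range (m + 1),
      (-(m.factorial : ℝ) / k.factorial) * (z ^ k * Real.exp (-z))) atTop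
      (nhds (∑ k ∈ Finset.range (m + 1), (-(m.factorial : ℝ) / k.factorial) * 0)) := by
    apply tendsto_finset_sum
    intro k _
    exact (tendsto_pow_mul_exp_neg_atTop_nhds_zero k).const_mul _
  simpa using this

lemma integrableOn_pow_mul_exp_neg (m : ℕ) {x : ℝ} (hx : 0 ≤ x) :
    IntegrableOn (fun z : ℝ => z ^ m * Real.exp (-z)) (Ioi x) := by
  have h := Real.GammaIntegral_convergent (s := (m + 1 : ℝ)) (by positivity)
  have h2 : IntegrableOn (fun z : ℝ => Real.exp (-z) * z ^ ((m + 1 : ℝ) - 1)) (Ioi x) :=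
    h.mono_set (Ioi_subset_Ioi hx)
  apply h2.congr_fun ?_ measurableSet_Ioi
  intro z hz
  have hz0 : 0 < z := lt_of_le_of_lt hx hz
  simp only [show (m + 1 : ℝ) - 1 = (m : ℝ) by ring]
  rw [Real.rpow_natCast]
  ring

lemma incGamma_nat (m : ℕ) {x : ℝ} (hx : 0 ≤ x) :
    incGamma (m + 1) x
      = (m.factorial : ℝ) * (Real.exp (-x) * ∑ k ∈ Finset.range (m + 1), x ^ k / k.factorial) := by
  have h1 : incGamma (m + 1) x = ∫ z in Ioi x, z ^ m * Real.exp (-z) := by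
    unfold incGamma
    apply setIntegral_congr_fun measurableSet_Ioi
    intro z hz
    have hz0 : 0 < z := lt_of_le_of_lt hx hz
    simp only [show ((m : ℝ) + 1) - 1 = (m : ℝ) by ring]
    rw [Real.rpow_natCast]
  rw [h1]
  have := integral_Ioi_of_hasDerivAt_of_tendsto
    (f := fun z : ℝ => -(m.factorial : ℝ) *
        (Real.exp (-z) * ∑ k ∈ Finset.range (m + 1), z ^ k / k.factorial))
    (f' := fun z : ℝ => z ^ m * Real.exp (-z)) (a := x) (m := 0)
    ?_ (fun z _ => F_hasDerivAt m z) (integrableOn_pow_mul_exp_neg m hx) (F_tendsto m)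
  · rw [this]; ring
  · exact ((F_hasDerivAt m x).continuousAt).continuousWithinAt

noncomputable def W (d : ℕ) (a : ℝ) : ℝ :=
  if 1 ≤ a then 1 else a * ∑ k ∈ Finset.range d, (-Real.log a) ^ k / k.factorial

def Sset (d : ℕ) (a : ℝ) : Set (Fin d → ℝ) := {v | (∀ i, |v i| ≤ 1) ∧ |∏ i, v i| ≤ a}

lemma measurableSet_Sset (d : ℕ) (a : ℝ) : MeasurableSet (Sset d a) := by
  have h1 : MeasurableSet {v : Fin d → ℝ | ∀ i, |v i| ≤ 1} := by
    rw [Set.setOf_forall]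
    exact MeasurableSet.iInter fun i =>
      measurableSet_le ((measurable_pi_apply i).abs) measurable_const
  have h2 : MeasurableSet {v : Fin d → ℝ | |∏ i, v i| ≤ a} :=
    measurableSet_le (Finset.measurable_prod _ fun i _ => measurable_pi_apply i).abs
      measurable_const
  rw [show Sset d a = {v : Fin d → ℝ | ∀ i, |v i| ≤ 1} ∩ {v : Fin d → ℝ | |∏ i, v i| ≤ a} from rfl]
  exact h1.inter h2

lemma W_nonneg (d : ℕ) {a : ℝ} (ha : 0 < a) : 0 ≤ W d a := by
  unfold W
  split
  · norm_num
  · rename_i h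
    have hl : 0 ≤ -Real.log a := by
      rw [neg_nonneg]; exact Real.log_nonpos ha.le (le_of_not_ge h)
    have : 0 ≤ ∑ k ∈ Finset.range d, (-Real.log a) ^ k / k.factorial :=
      Finset.sum_nonneg fun k _ => by positivity
    positivity

lemma W_le_one (d : ℕ) {a : ℝ} (ha : 0 < a) : W d a ≤ 1 := by
  unfold W
  split
  · exact le_refl 1
  · rename_i h
    have hl : 0 ≤ -Real.log a := by
      rw [neg_nonneg]; exact Real.log_nonpos ha.le (le_of_not_ge h)
    calc a * ∑ k ∈ Finset.range d, (-Real.log a) ^ k / k.factorial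
        ≤ a * Real.exp (-Real.log a) :=
          mul_le_mul_of_nonneg_left (Real.sum_le_exp_of_nonneg hl d) ha.le
      _ = 1 := by rw [Real.exp_neg, Real.exp_log ha]; field_simp

lemma measurable_Wcomp (d : ℕ) (a : ℝ) : Measurable fun t : ℝ => W d (a / |t|) := by
  have hm : Measurable fun t : ℝ => a / |t| := measurable_const.div measurable_abs
  unfold W
  refine Measurable.ite (measurableSet_le measurable_const hm) measurable_const ?_
  exact hm.mul <| Finset.measurable_sum _ fun k _ =>
    ((Real.measurable_log.comp hm).neg.pow_const k).div_const _

lemma Wcomp_bounds (d : ℕ) {a : ℝ} (ha : 0 < a) (t : ℝ) :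
    0 ≤ W d (a / |t|) ∧ W d (a / |t|) ≤ 1 := by
  rcases eq_or_ne t 0 with rfl | ht
  · simp only [abs_zero, div_zero]
    unfold W
    norm_num
  · have h : 0 < a / |t| := div_pos ha (abs_pos.2 ht)
    exact ⟨W_nonneg d h, W_le_one d h⟩

lemma integrableOn_Wcomp (d : ℕ) {a : ℝ} (ha : 0 < a) :
    IntegrableOn (fun t : ℝ => W d (a / |t|)) (Set.Icc (-1 : ℝ) 1) := by
  haveI : IsFiniteMeasure (volume.restrict (Set.Icc (-1 : ℝ) 1)) := by
    constructor
    rw [Measure.restrict_apply_univ, Real.volume_Icc]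
    exact ENNReal.ofReal_lt_top
  refine ⟨((measurable_Wcomp d a).aestronglyMeasurable).restrict, ?_⟩
  apply MeasureTheory.HasFiniteIntegral.of_bounded (C := 1)
  filter_upwards with t
  rw [Real.norm_eq_abs, abs_le]
  have h := Wcomp_bounds d ha t
  constructor <;> linarith [h.1, h.2]

lemma intervalIntegrable_Wcomp (d : ℕ) {a : ℝ} (ha : 0 < a) {u v : ℝ}
    (hu : -1 ≤ u) (huv : u ≤ v) (hv : v ≤ 1) :
    IntervalIntegrable (fun t : ℝ => W d (a / |t|)) volume u v := by
  rw [intervalIntegrable_iff_integrableOn_Ioc_of_le huv]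
  exact (integrableOn_Wcomp d ha).mono_set
    (subset_trans Set.Ioc_subset_Icc_self (Set.Icc_subset_Icc hu hv))

lemma integral_Wcomp01 (d : ℕ) {a : ℝ} (ha : 0 < a) :
    ∫ t in (0 : ℝ)..1, W d (a / |t|) = W (d + 1) a := by
  by_cases h1 : 1 ≤ a
  · rw [intervalIntegral.integral_of_le zero_le_one]
    have : ∀ t ∈ Set.Ioc (0 : ℝ) 1, W d (a / |t|) = 1 := by
      intro t ht
      have ht0 : 0 < t := ht.1
      rw [abs_of_pos ht0]
      unfold W
      rw [if_pos ((one_le_div ht0).2 (le_trans ht.2 h1))]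
    rw [setIntegral_congr_fun measurableSet_Ioc this]
    simp [Real.volume_Ioc, W, h1]
  · push_neg at h1
    have ha1 : a ≤ 1 := h1.le
    set L : ℝ := -Real.log a with hL
    have hLpos : 0 ≤ L := by rw [hL, neg_nonneg]; exact Real.log_nonpos ha.le ha1
    -- split at a
    have hsplit := intervalIntegral.integral_add_adjacent_intervals
      (intervalIntegrable_Wcomp d ha (by norm_num) ha.le ha1)
      (intervalIntegrable_Wcomp d ha (by linarith) ha1 le_rfl)
      (μ := volume) (f := fun t : ℝ => W d (a / |t|))
    -- piece 1 : ∫_0^a = a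
    have hp1 : ∫ t in (0 : ℝ)..a, W d (a / |t|) = a := by
      rw [intervalIntegral.integral_of_le ha.le]
      have : ∀ t ∈ Set.Ioc (0 : ℝ) a, W d (a / |t|) = 1 := by
        intro t ht
        rw [abs_of_pos ht.1]
        unfold W
        rw [if_pos ((one_le_div ht.1).2 ht.2)]
      rw [setIntegral_congr_fun measurableSet_Ioc this]
      simp [Real.volume_Ioc, ha.le]
    -- piece 2 : ∫_a^1
    have hp2 : ∫ t in a..(1 : ℝ), W d (a / |t|)
        = a * ∑ k ∈ Finset.range d, L ^ (k + 1) / (k + 1).factorial := by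
      have hcongr : ∀ t ∈ Set.Ioc a (1 : ℝ), W d (a / |t|)
          = (a / t) * ∑ k ∈ Finset.range d, (Real.log t - Real.log a) ^ k / k.factorial := by
        intro t ht
        have ht0 : 0 < t := lt_trans ha ht.1
        rw [abs_of_pos ht0]
        unfold W
        rw [if_neg (by rw [not_le, div_lt_one ht0]; exact ht.1)]
        congr 1
        apply Finset.sum_congr rfl
        intro k _
        congr 2
        rw [Real.log_div ha.ne' ht0.ne']
        ring
      rw [intervalIntegral.integral_of_le ha1, setIntegral_congr_fun measurableSet_Ioc hcongr,
        ← intervalIntegral.integral_of_le ha1]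
      -- FTC
      have hderiv : ∀ t ∈ Set.uIcc a (1:ℝ), HasDerivAt
          (fun t => a * ∑ k ∈ Finset.range d, (Real.log t - Real.log a) ^ (k+1) / (k+1).factorial)
          ((a / t) * ∑ k ∈ Finset.range d, (Real.log t - Real.log a) ^ k / k.factorial) t := by
        intro t ht
        rw [Set.uIcc_of_le ha1] at ht
        have ht0 : 0 < t := lt_of_lt_of_le ha ht.1
        have hlog : HasDerivAt (fun t : ℝ => Real.log t - Real.log a) (1 / t) t := by
          simpa using (Real.hasDerivAt_log ht0.ne').sub_const (Real.log a)
        have hsum : HasDerivAt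
            (fun t => ∑ k ∈ Finset.range d, (Real.log t - Real.log a) ^ (k+1) / (k+1).factorial)
            (∑ k ∈ Finset.range d,
              ((k+1) * (Real.log t - Real.log a) ^ k * (1 / t)) / (k+1).factorial) t := by
          apply HasDerivAt.fun_sum
          intro k _
          exact (((hasDerivAt_pow (k+1) _).comp t hlog).div_const _).congr_deriv (by
            simp only [Nat.add_sub_cancel]
            push_cast
            ring)
        have := hsum.const_mul a
        apply this.congr_deriv
        rw [Finset.mul_sum, Finset.mul_sum]
        apply Finset.sum_congr rfl
        intro k _
        have hk : ((k+1).factorial : ℝ) = (k+1) * k.factorial := by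
          rw [Nat.factorial_succ]; push_cast; ring
        rw [hk]
        field_simp
      have hcont : IntervalIntegrable (fun t =>
          (a / t) * ∑ k ∈ Finset.range d, (Real.log t - Real.log a) ^ k / k.factorial)
          volume a 1 := by
        apply ContinuousOn.intervalIntegrable
        apply ContinuousOn.mul
        · exact continuousOn_const.div continuousOn_id (by
            intro t ht
            rw [Set.uIcc_of_le ha1] at ht
            exact (lt_of_lt_of_le ha ht.1).ne')
        · apply continuousOn_finset_sum
          intro k _
          apply ContinuousOn.div_const
          apply ContinuousOn.pow
          apply ContinuousOn.sub _ continuousOn_const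
          apply Real.continuousOn_log.mono
          intro t ht
          rw [Set.uIcc_of_le ha1] at ht
          exact (lt_of_lt_of_le ha ht.1).ne'
      rw [intervalIntegral.integral_eq_sub_of_hasDerivAt hderiv hcont]
      simp only [Real.log_one, zero_sub, sub_self]
      rw [show (∑ k ∈ Finset.range d, (0:ℝ) ^ (k+1) / (k+1).factorial) = 0 by
        apply Finset.sum_eq_zero; intro k _; simp]
      rw [mul_zero, sub_zero]
    rw [← hsplit, hp1, hp2]
    unfold W
    rw [if_neg (not_le.2 h1)]
    rw [Finset.sum_range_succ' (fun k => L ^ k / (k.factorial : ℝ)) d]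
    simp only [pow_zero, Nat.factorial_zero, Nat.cast_one]
    have : ∀ k : ℕ, L ^ (k+1) / ((k+1).factorial : ℝ) = (-Real.log a) ^ (k+1) / ((k+1).factorial : ℝ) := by
      intro k; rw [hL]
    simp only [this]
    ring

lemma integral_Wcomp (d : ℕ) {a : ℝ} (ha : 0 < a) :
    ∫ t in Set.Icc (-1 : ℝ) 1, W d (a / |t|) = 2 * W (d + 1) a := by
  have hneg : ∫ t in (-1 : ℝ)..0, W d (a / |t|) = ∫ t in (0 : ℝ)..1, W d (a / |t|) := by
    have := intervalIntegral.integral_comp_neg (a := (0:ℝ)) (b := 1)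
      (f := fun t : ℝ => W d (a / |t|))
    simp only [abs_neg, neg_zero] at this
    rw [← this]
  have hsplit := intervalIntegral.integral_add_adjacent_intervals
    (intervalIntegrable_Wcomp d ha le_rfl (by norm_num) (by norm_num))
    (intervalIntegrable_Wcomp d ha (by norm_num) zero_le_one le_rfl)
    (μ := volume) (f := fun t : ℝ => W d (a / |t|))
  rw [MeasureTheory.integral_Icc_eq_integral_Ioc,
    ← intervalIntegral.integral_of_le (by norm_num : (-1:ℝ) ≤ 1), ← hsplit, hneg,
    integral_Wcomp01 d ha]
  ring

lemma volume_Sset : ∀ (d : ℕ) {a : ℝ}, 0 < a →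
    volume (Sset d a) = ENNReal.ofReal (2 ^ d * W d a) := by
  intro d
  induction d with
  | zero =>
    intro a ha
    by_cases h : 1 ≤ a
    · have hs : Sset 0 a = Set.univ := by
        ext v
        simp [Sset, h]
      rw [hs, W, if_pos h]
      rw [volume_pi, Measure.pi_univ]
      simp
    · have hs : Sset 0 a = ∅ := by
        ext v
        simp [Sset]
        exact not_le.1 h
      rw [hs, W, if_neg h]
      simp
  | succ d ih =>
    intro a ha
    set e : (Fin (d+1) → ℝ) ≃ᵐ ℝ × (Fin d → ℝ) :=
      MeasurableEquiv.piFinSuccAbove (fun _ : Fin (d+1) => ℝ) 0 with he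
    have hmp := measurePreserving_piFinSuccAbove (fun _ : Fin (d+1) => (volume : Measure ℝ)) 0
    have hT : MeasurableSet (e.symm ⁻¹' Sset (d+1) a) :=
      e.symm.measurable (measurableSet_Sset (d+1) a)
    have h1 : volume (Sset (d+1) a)
        = ((volume : Measure ℝ).prod (volume : Measure (Fin d → ℝ)))
            (e.symm ⁻¹' Sset (d+1) a) := by
      have h2 : (volume : Measure (Fin d → ℝ)) = Measure.pi fun _ : Fin d => (volume : Measure ℝ) :=
        volume_pi
      rw [h2, ← hmp.map_eq, MeasurableEquiv.map_apply]
      rw [show (⇑e ⁻¹' (⇑e.symm ⁻¹' Sset (d+1) a)) = Sset (d+1) a by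
        simp [Set.preimage_preimage]]
      rw [← volume_pi]
    have hsec : ∀ t : ℝ, t ≠ 0 →
        Prod.mk t ⁻¹' (e.symm ⁻¹' Sset (d+1) a)
          = if |t| ≤ 1 then Sset d (a / |t|) else (∅ : Set (Fin d → ℝ)) := by
      intro t ht
      have habs : 0 < |t| := abs_pos.2 ht
      ext v
      have hw0 : e.symm (t, v) 0 = t := by simp [he]
      have hwj : ∀ j : Fin d, e.symm (t, v) j.succ = v j := by
        intro j; simp [he]
      have hall : (∀ i, |e.symm (t, v) i| ≤ 1) ↔ (|t| ≤ 1 ∧ ∀ j, |v j| ≤ 1) := by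
        rw [Fin.forall_iff_succAbove (P := fun i => |e.symm (t, v) i| ≤ 1) (0 : Fin (d+1))]
        simp [hw0, hwj]
      have hprod : (∏ i, e.symm (t, v) i) = t * ∏ j, v j := by
        rw [Fin.prod_univ_succAbove (fun i => e.symm (t, v) i) 0]
        simp [hw0, hwj]
      have hmem : e.symm (t, v) ∈ Sset (d+1) a
          ↔ ((|t| ≤ 1 ∧ ∀ j, |v j| ≤ 1) ∧ |t * ∏ j, v j| ≤ a) := by
        simp only [Sset, Set.mem_setOf_eq, hall, hprod]
      have hiff : |t * ∏ j, v j| ≤ a ↔ |∏ j, v j| ≤ a / |t| := by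
        rw [abs_mul, le_div_iff₀ habs, mul_comm]
      by_cases h : |t| ≤ 1
      · rw [if_pos h]
        simp only [Set.mem_preimage]
        rw [hmem, hiff]
        simp only [Sset, Set.mem_setOf_eq]
        exact ⟨fun hx => ⟨hx.1.2, hx.2⟩, fun hx => ⟨⟨h, hx.1⟩, hx.2⟩⟩
      · rw [if_neg h]
        simp only [Set.mem_preimage]
        rw [hmem]
        simp only [Set.mem_empty_iff_false, iff_false]
        exact fun hx => h hx.1.1
    rw [h1, Measure.prod_apply hT]
    have hae : (fun t : ℝ => volume (Prod.mk t ⁻¹' (e.symm ⁻¹' Sset (d+1) a)))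
        =ᵐ[volume] fun t => (Set.Icc (-1:ℝ) 1).indicator
            (fun t => ENNReal.ofReal (2 ^ d * W d (a / |t|))) t := by
      have h0 : ({0} : Set ℝ)ᶜ ∈ ae (volume : Measure ℝ) := by
        apply compl_mem_ae_iff.2
        simp
      filter_upwards [h0] with t ht
      have ht0 : t ≠ 0 := ht
      rw [hsec t ht0]
      have habs : 0 < |t| := abs_pos.2 ht0
      by_cases h : |t| ≤ 1
      · rw [if_pos h, ih (div_pos ha habs), Set.indicator_apply,
          if_pos (show t ∈ Set.Icc (-1:ℝ) 1 from abs_le.1 h)]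
      · rw [if_neg h, Set.indicator_apply,
          if_neg (show t ∉ Set.Icc (-1:ℝ) 1 from fun hc => h (abs_le.2 hc))]
        simp
    rw [lintegral_congr_ae hae, lintegral_indicator measurableSet_Icc]
    have hInt : Integrable (fun t : ℝ => 2 ^ d * W d (a / |t|))
        (volume.restrict (Set.Icc (-1:ℝ) 1)) := (integrableOn_Wcomp d ha).const_mul _
    have hnn : 0 ≤ᵐ[volume.restrict (Set.Icc (-1:ℝ) 1)]
        fun t : ℝ => 2 ^ d * W d (a / |t|) := by
      filter_upwards with t
      have h := (Wcomp_bounds d ha t).1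
      positivity
    rw [← MeasureTheory.ofReal_integral_eq_lintegral_ofReal hInt hnn,
      MeasureTheory.integral_const_mul, integral_Wcomp d ha]
    congr 1
    ring


/-- exact value of the Lebesgue measure of D_n via the incomplete
Gamma function. -/
theorem volume_Dn_eq
    {d : ℕ} (hd : 1 ≤ d) (n : ℝ) (hn : 1 ≤ n) :
    (volume {u : Fin d → ℝ | (∀ i, |u i| ≤ n) ∧ |∏ i, u i| ≤ n}).toReal
      = (2 * n) ^ d * incGamma d (((d : ℝ) - 1) * Real.log n)
          / (Nat.factorial (d - 1)) := by
  have hn0 : 0 < n := lt_of_lt_of_le one_pos hn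
  have hnd : 0 < n ^ d := pow_pos hn0 d
  set a : ℝ := n / n ^ d with haa
  have ha : 0 < a := div_pos hn0 hnd
  have ha1 : a ≤ 1 := by
    rw [haa, div_le_one hnd]
    calc n = n ^ 1 := (pow_one n).symm
      _ ≤ n ^ d := pow_le_pow_right₀ hn hd
  -- the set is n • Sset d a
  have hset : {u : Fin d → ℝ | (∀ i, |u i| ≤ n) ∧ |∏ i, u i| ≤ n} = n • Sset d a := by
    ext u
    rw [Set.mem_smul_set_iff_inv_smul_mem₀ hn0.ne']
    simp only [Sset, Set.mem_setOf_eq, Pi.smul_apply, smul_eq_mul]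
    constructor
    · rintro ⟨h1, h2⟩
      constructor
      · intro i
        rw [abs_mul, abs_inv, abs_of_pos hn0]
        rw [inv_mul_le_iff₀ hn0, mul_one]
        exact h1 i
      · rw [Finset.prod_mul_distrib, Finset.prod_const, Finset.card_univ, Fintype.card_fin, abs_mul, abs_pow, abs_inv,
          abs_of_pos hn0, inv_pow, haa]
        rw [inv_mul_le_iff₀ (pow_pos hn0 d)]
        rw [show n ^ d * (n / n ^ d) = n by field_simp]
        exact h2
    · rintro ⟨h1, h2⟩
      constructor
      · intro i
        have := h1 i
        rw [abs_mul, abs_inv, abs_of_pos hn0, inv_mul_le_iff₀ hn0, mul_one] at this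
        exact this
      · rw [Finset.prod_mul_distrib, Finset.prod_const, Finset.card_univ, Fintype.card_fin, abs_mul, abs_pow, abs_inv,
          abs_of_pos hn0, inv_pow, haa, inv_mul_le_iff₀ (pow_pos hn0 d),
          show n ^ d * (n / n ^ d) = n by field_simp] at h2
        exact h2
  rw [hset, Measure.addHaar_smul, volume_Sset d ha, Module.finrank_fin_fun,
    abs_of_pos hnd, ← ENNReal.ofReal_mul hnd.le, ENNReal.toReal_ofReal
      (by have := W_nonneg d ha; positivity)]
  -- now identify W with incGamma
  obtain ⟨m, rfl⟩ : ∃ m, d = m + 1 := ⟨d - 1, (Nat.succ_pred_eq_of_pos hd).symm⟩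
  have hlog : Real.log a = -((((m + 1 : ℕ) : ℝ) - 1) * Real.log n) := by
    rw [haa, Real.log_div hn0.ne' hnd.ne', Real.log_pow]
    push_cast
    ring
  have hx : 0 ≤ (((m + 1 : ℕ) : ℝ) - 1) * Real.log n := by
    have : (0:ℝ) ≤ ((m + 1 : ℕ) : ℝ) - 1 := by push_cast; linarith
    exact mul_nonneg this (Real.log_nonneg hn)
  have hig := incGamma_nat m hx
  rw [show ((m : ℝ) + 1) = (((m+1 : ℕ) : ℝ)) by push_cast; ring] at hig
  rw [hig]
  have hexp : Real.exp (-((((m + 1 : ℕ) : ℝ) - 1) * Real.log n)) = a := by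
    rw [← hlog, Real.exp_log ha]
  rw [hexp]
  have hW : W (m+1) a = a * ∑ k ∈ Finset.range (m+1),
      ((((m + 1 : ℕ) : ℝ) - 1) * Real.log n) ^ k / k.factorial := by
    have hxa : -Real.log a = (((m + 1 : ℕ) : ℝ) - 1) * Real.log n := by rw [hlog]; ring
    unfold W
    rcases lt_or_eq_of_le ha1 with h | h
    · rw [if_neg (not_le.2 h), hxa]
    · have hx0 : ((((m + 1 : ℕ) : ℝ) - 1) * Real.log n) = 0 := by
        rw [← hxa, h, Real.log_one, neg_zero]
      rw [if_pos h.ge, h, hx0]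
      rw [Finset.sum_range_succ' (fun k => (0:ℝ) ^ k / (k.factorial : ℝ)) m]
      simp
  rw [hW]
  rw [show (m + 1 - 1) = m from rfl]
  have hfac : (0:ℝ) < (m.factorial : ℝ) := by positivity
  field_simp
  ring

end ADE
end
end

section
/- Let d ≥ 2 and for a real number n > 1 let D_n = [-n,n]^d ∩ { u ∈ ℝ^d : |u_1⋯u_d| ≤ n }. Then, as n → ∞, the Lebesgue measure of D_n satisfies λ_d(D_n) ~ (2^d (d−1)^{d−1} / (d−1)!) · n (log n)^{d−1}, i.e. the ratio of the two sides tends to 1. -/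
open MeasureTheory Real Filter
open scoped BigOperators ENNReal

noncomputable section

namespace ADE

variable {Ω : Type*} [MeasurableSpace Ω] {E : Type*} [MeasurableSpace E]

open scoped Pointwise

def Gs (d : ℕ) (t : ℝ) : ℝ := t * ∑ k ∈ Finset.range d, (Real.log t⁻¹)^k / (Nat.factorial k)
def G (d : ℕ) (t : ℝ) : ℝ := if 1 ≤ t then 1 else Gs d t

lemma log_inv_nonneg {t : ℝ} (h0 : 0 ≤ t) (h1 : t ≤ 1) : 0 ≤ Real.log t⁻¹ := by
  rcases eq_or_lt_of_le h0 with h | h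
  · simp [← h]
  · rw [Real.log_inv]
    simpa using Real.log_nonpos (le_of_lt h) h1

lemma Gs_nonneg {d : ℕ} {t : ℝ} (h0 : 0 ≤ t) (h1 : t ≤ 1) : 0 ≤ Gs d t := by
  have := log_inv_nonneg h0 h1
  unfold Gs; positivity

lemma G_nonneg {d : ℕ} {t : ℝ} (h0 : 0 ≤ t) : 0 ≤ G d t := by
  unfold G
  split
  · norm_num
  · exact Gs_nonneg h0 (le_of_not_ge (by assumption))

lemma G_le_one {d : ℕ} {t : ℝ} (h0 : 0 ≤ t) : G d t ≤ 1 := by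
  unfold G
  split
  · exact le_refl 1
  · rcases eq_or_lt_of_le h0 with h | h
    · simp [Gs, ← h]
    · have ht1 : t ≤ 1 := le_of_not_ge (by assumption)
      have hb : ∑ k ∈ Finset.range d, (Real.log t⁻¹)^k / (Nat.factorial k) ≤ Real.exp (Real.log t⁻¹) :=
        Real.sum_le_exp_of_nonneg (log_inv_nonneg (le_of_lt h) ht1) d
      rw [Real.exp_log (by positivity)] at hb
      calc Gs d t ≤ t * t⁻¹ := by
            exact mul_le_mul_of_nonneg_left hb (le_of_lt h)
        _ = 1 := mul_inv_cancel₀ (ne_of_gt h)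

lemma measurable_G (d : ℕ) : Measurable (G d) := by
  unfold G Gs
  apply Measurable.ite (measurableSet_le measurable_const measurable_id) measurable_const
  exact measurable_id.mul (Finset.measurable_sum _ fun k _ =>
    ((Real.measurable_log.comp measurable_inv).pow_const k).div_const _)


lemma ftc_piece (k : ℕ) {t : ℝ} (ht : 0 < t) (ht1 : t < 1) :
    ∫ y in t..1, (t/y) * (Real.log y - Real.log t)^k / (Nat.factorial k)
      = t * (Real.log t⁻¹)^(k+1) / (Nat.factorial (k+1)) := by
  have hfac : (Nat.factorial k : ℝ) ≠ 0 := Nat.cast_ne_zero.mpr (Nat.factorial_ne_zero k)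
  have hder : ∀ y ∈ Set.uIcc t 1, HasDerivAt
      (fun y => t / (((k:ℝ)+1) * (Nat.factorial k)) * (Real.log y - Real.log t)^(k+1))
      ((t/y) * (Real.log y - Real.log t)^k / (Nat.factorial k)) y := by
    intro y hy
    rw [Set.uIcc_of_le (le_of_lt ht1)] at hy
    have hy0 : y ≠ 0 := ne_of_gt (lt_of_lt_of_le ht hy.1)
    have h1 : HasDerivAt (fun y => Real.log y - Real.log t) y⁻¹ y :=
      (Real.hasDerivAt_log hy0).sub_const _
    have h2 := (h1.pow (k+1)).const_mul (t / (((k:ℝ)+1) * (Nat.factorial k)))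
    refine h2.congr_deriv ?_
    push_cast
    field_simp
  have hint : IntervalIntegrable
      (fun y => (t/y) * (Real.log y - Real.log t)^k / (Nat.factorial k)) volume t 1 := by
    apply ContinuousOn.intervalIntegrable
    rw [Set.uIcc_of_le (le_of_lt ht1)]
    have hne : ∀ y ∈ Set.Icc t 1, y ≠ 0 := fun y hy => ne_of_gt (lt_of_lt_of_le ht hy.1)
    have hsub : Set.Icc t 1 ⊆ {(0:ℝ)}ᶜ := fun y hy => hne y hy
    exact ((continuousOn_const.div continuousOn_id hne).mul
      (((Real.continuousOn_log.mono hsub).sub continuousOn_const).pow k)).div_const _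
  rw [intervalIntegral.integral_eq_sub_of_hasDerivAt hder hint]
  rw [Real.log_one, Real.log_inv, sub_self, zero_pow (Nat.succ_ne_zero k)]
  rw [Nat.factorial_succ]
  push_cast
  field_simp
  ring

lemma integrableOn_G_div (d : ℕ) {t : ℝ} (ht : 0 < t) {s : Set ℝ}
    (hs : MeasurableSet s) (hvol : volume s ≠ ⊤) (hpos : ∀ y ∈ s, 0 < y) :
    IntegrableOn (fun y => G d (t/y)) s := by
  apply Measure.integrableOn_of_bounded hvol
    (((measurable_G d).comp (measurable_const.div measurable_id)).aestronglyMeasurable)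
    (M := 1)
  filter_upwards [ae_restrict_mem hs] with y hy
  have hy0 := hpos y hy
  have h0 : 0 ≤ t / y := le_of_lt (div_pos ht hy0)
  simp only [Function.comp_apply, Pi.div_apply, id, Real.norm_eq_abs]
  rw [abs_of_nonneg (G_nonneg h0)]
  exact G_le_one h0

lemma integral_G_div (d : ℕ) {t : ℝ} (ht : 0 < t) (ht1 : t < 1) :
    ∫ y in Set.Ioc (0:ℝ) 1, G d (t/y) = Gs (d+1) t := by
  have hsplit : Set.Ioc (0:ℝ) 1 = Set.Ioc 0 t ∪ Set.Ioc t 1 :=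
    (Set.Ioc_union_Ioc_eq_Ioc (le_of_lt ht) (le_of_lt ht1)).symm
  rw [hsplit, setIntegral_union (Set.Ioc_disjoint_Ioc_of_le le_rfl) measurableSet_Ioc
      (integrableOn_G_div d ht measurableSet_Ioc (by simp) (fun y hy => hy.1))
      (integrableOn_G_div d ht measurableSet_Ioc (by simp) (fun y hy => lt_of_lt_of_le ht (le_of_lt hy.1)))]
  have h1 : ∫ y in Set.Ioc (0:ℝ) t, G d (t/y) = t := by
    rw [setIntegral_congr_fun measurableSet_Ioc (g := fun _ => (1:ℝ))
      (fun y hy => by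
        have : 1 ≤ t / y := (one_le_div (hy.1)).mpr hy.2
        simp [G, this])]
    simp [Real.volume_Ioc, ENNReal.toReal_ofReal (le_of_lt ht), ht.le]
  have h2 : ∫ y in Set.Ioc t 1, G d (t/y)
      = ∑ k ∈ Finset.range d, t * (Real.log t⁻¹)^(k+1) / (Nat.factorial (k+1)) := by
    rw [setIntegral_congr_fun measurableSet_Ioc
      (g := fun y => ∑ k ∈ Finset.range d, (t/y) * (Real.log y - Real.log t)^k / (Nat.factorial k))
      (fun y hy => by
        have hy0 : 0 < y := lt_of_lt_of_le ht (le_of_lt hy.1)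
        have hlt : t / y < 1 := (div_lt_one hy0).mpr hy.1
        have hinv : (t/y)⁻¹ = y / t := by rw [inv_div]
        have hlog : Real.log (t/y)⁻¹ = Real.log y - Real.log t := by
          rw [hinv, Real.log_div (ne_of_gt hy0) (ne_of_gt ht)]
        simp only [G, if_neg (not_le.mpr hlt), Gs, hlog, Finset.mul_sum]
        congr 1; ext k; ring)]
    rw [← intervalIntegral.integral_of_le (le_of_lt ht1)]
    rw [intervalIntegral.integral_finset_sum (fun k _ => by
      apply ContinuousOn.intervalIntegrable
      rw [Set.uIcc_of_le (le_of_lt ht1)]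
      have hne : ∀ y ∈ Set.Icc t 1, y ≠ 0 := fun y hy => ne_of_gt (lt_of_lt_of_le ht hy.1)
      have hsub : Set.Icc t 1 ⊆ {(0:ℝ)}ᶜ := fun y hy => hne y hy
      exact ((continuousOn_const.div continuousOn_id hne).mul
        (((Real.continuousOn_log.mono hsub).sub continuousOn_const).pow k)).div_const _)]
    exact Finset.sum_congr rfl fun k _ => ftc_piece k ht ht1
  rw [h1, h2, Gs, Finset.sum_range_succ']
  simp only [pow_zero, Nat.factorial_zero, Nat.cast_one]
  rw [mul_add, Finset.mul_sum]
  norm_num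
  rw [add_comm]
  congr 1
  exact Finset.sum_congr rfl fun k _ => by ring


lemma measurableSet_S (d : ℕ) (t : ℝ) :
    MeasurableSet {u : Fin d → ℝ | (∀ i, |u i| ≤ 1) ∧ |∏ i, u i| ≤ t} := by
  rw [Set.setOf_and]
  refine MeasurableSet.inter ?_ ?_
  · rw [Set.setOf_forall]
    exact MeasurableSet.iInter fun i =>
      measurableSet_le (measurable_pi_apply i).abs measurable_const
  · exact measurableSet_le (Finset.measurable_prod _ fun i _ => measurable_pi_apply i).abs
      measurable_const

lemma volume_cube (d : ℕ) :
    volume {u : Fin d → ℝ | ∀ i, |u i| ≤ 1} = ENNReal.ofReal (2^d) := by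
  have h : {u : Fin d → ℝ | ∀ i, |u i| ≤ 1} = Set.univ.pi (fun _ => Set.Icc (-1) 1) := by
    ext u; simp only [Set.mem_pi, Set.mem_univ, forall_const, Set.mem_Icc, Set.mem_setOf_eq,
      abs_le]
  rw [h, volume_pi_pi]
  simp only [Real.volume_Icc]
  rw [Finset.prod_const, Finset.card_univ, Fintype.card_fin,
    ← ENNReal.ofReal_pow (by norm_num)]
  norm_num

lemma volume_S (d : ℕ) : ∀ t : ℝ, 0 < t →
    volume {u : Fin d → ℝ | (∀ i, |u i| ≤ 1) ∧ |∏ i, u i| ≤ t}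
      = ENNReal.ofReal (2^d * G d t) := by
  induction d with
  | zero =>
    intro t ht
    by_cases h1 : 1 ≤ t
    · have h : {u : Fin 0 → ℝ | (∀ i, |u i| ≤ 1) ∧ |∏ i, u i| ≤ t} = Set.univ := by
        ext u; simp [h1]
      rw [h, volume_pi, Measure.pi_univ]
      simp [G, h1]
    · have h : {u : Fin 0 → ℝ | (∀ i, |u i| ≤ 1) ∧ |∏ i, u i| ≤ t} = ∅ := by
        ext u; simp [h1]
      rw [h]
      simp [G, h1, Gs]
  | succ d ih =>
    intro t ht
    by_cases h1 : 1 ≤ t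
    · have hset : {u : Fin (d+1) → ℝ | (∀ i, |u i| ≤ 1) ∧ |∏ i, u i| ≤ t}
          = {u : Fin (d+1) → ℝ | ∀ i, |u i| ≤ 1} := by
        ext u
        refine ⟨fun h => h.1, fun h => ⟨h, ?_⟩⟩
        calc |∏ i, u i| = ∏ i, |u i| := Finset.abs_prod _ _
          _ ≤ 1 := Finset.prod_le_one (fun i _ => abs_nonneg _) (fun i _ => h i)
          _ ≤ t := h1
      rw [hset, volume_cube]
      simp [G, h1]
    · push_neg at h1
      set T : Set (ℝ × (Fin d → ℝ)) :=
        {p | (|p.1| ≤ 1 ∧ ∀ j, |p.2 j| ≤ 1) ∧ |p.1| * |∏ j, p.2 j| ≤ t} with hTdef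
      have hT : MeasurableSet T := by
        have hfa : MeasurableSet {p : ℝ × (Fin d → ℝ) | ∀ j, |p.2 j| ≤ 1} := by
          have he : {p : ℝ × (Fin d → ℝ) | ∀ j, |p.2 j| ≤ 1}
              = ⋂ j, {p : ℝ × (Fin d → ℝ) | |p.2 j| ≤ 1} := by ext p; simp
          rw [he]
          exact MeasurableSet.iInter fun j =>
            measurableSet_le (measurable_snd.eval (a := j)).abs measurable_const
        have h1' : MeasurableSet {p : ℝ × (Fin d → ℝ) | |p.1| ≤ 1} :=
          measurableSet_le measurable_fst.abs measurable_const
        have hprod : Measurable fun p : ℝ × (Fin d → ℝ) => ∏ j, p.2 j :=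
          Finset.measurable_prod _ fun j _ => measurable_snd.eval
        have h3' : MeasurableSet {p : ℝ × (Fin d → ℝ) | |p.1| * |∏ j, p.2 j| ≤ t} :=
          measurableSet_le (measurable_fst.abs.mul hprod.abs) measurable_const
        rw [hTdef, Set.setOf_and, Set.setOf_and]
        exact (h1'.inter hfa).inter h3'
      have hST : {u : Fin (d+1) → ℝ | (∀ i, |u i| ≤ 1) ∧ |∏ i, u i| ≤ t}
          = (MeasurableEquiv.piFinSuccAbove (fun _ : Fin (d+1) => ℝ) 0) ⁻¹' T := by
        ext u
        simp only [Set.mem_preimage, MeasurableEquiv.piFinSuccAbove_apply, hTdef,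
          Set.mem_setOf_eq, Fin.succAbove_zero]
        rw [Fin.forall_fin_succ, Fin.prod_univ_succ, abs_mul]
        simp [Fin.tail]
      have hmp := measurePreserving_piFinSuccAbove (fun _ : Fin (d+1) => (volume : Measure ℝ)) 0
      have hvolS : volume {u : Fin (d+1) → ℝ | (∀ i, |u i| ≤ 1) ∧ |∏ i, u i| ≤ t}
          = ((volume : Measure ℝ).prod (volume : Measure (Fin d → ℝ))) T := by
        rw [hST, volume_pi]
        have h2 := hmp.measure_preimage hT.nullMeasurableSet
        simpa [volume_pi] using h2
      rw [hvolS, Measure.prod_apply hT]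
      have hslice : ∀ x : ℝ, x ≠ 0 → volume (Prod.mk x ⁻¹' T)
          = ENNReal.ofReal ((fun y => if y ≤ 1 then 2^d * G d (t/y) else 0) |x|) := by
        intro x hx
        have hxpos : 0 < |x| := abs_pos.mpr hx
        by_cases hx1 : |x| ≤ 1
        · have hpre : Prod.mk x ⁻¹' T
              = {y : Fin d → ℝ | (∀ j, |y j| ≤ 1) ∧ |∏ j, y j| ≤ t/|x|} := by
            ext y
            simp only [Set.mem_preimage, hTdef, Set.mem_setOf_eq]
            constructor
            · rintro ⟨⟨_, h2⟩, h3⟩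
              exact ⟨h2, (le_div_iff₀ hxpos).mpr (by rw [mul_comm]; exact h3)⟩
            · rintro ⟨h2, h3⟩
              exact ⟨⟨hx1, h2⟩, by rw [mul_comm]; exact (le_div_iff₀ hxpos).mp h3⟩
          rw [hpre, ih (t/|x|) (div_pos ht hxpos)]
          simp only [if_pos hx1]
        · have hpre : Prod.mk x ⁻¹' T = ∅ := by
            ext y
            simp only [Set.mem_preimage, hTdef, Set.mem_setOf_eq, Set.mem_empty_iff_false,
              iff_false]
            rintro ⟨⟨h2, _⟩, _⟩
            exact hx1 h2
          rw [hpre]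
          simp [hx1]
      have hae : (fun x => volume (Prod.mk x ⁻¹' T))
          =ᵐ[volume] fun x => ENNReal.ofReal ((fun y => if y ≤ 1 then 2^d * G d (t/y) else 0) |x|) := by
        have h0 : ∀ᵐ x : ℝ, x ≠ 0 := by
          rw [ae_iff]
          simpa using measure_singleton (0:ℝ)
        filter_upwards [h0] with x hx using hslice x hx
      rw [lintegral_congr_ae hae]
      set H : ℝ → ℝ := fun y => if y ≤ 1 then 2^d * G d (t/y) else 0 with hH
      have hnnH : ∀ y : ℝ, 0 ≤ y → 0 ≤ H y := by
        intro y hy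
        by_cases hy1 : y ≤ 1
        · have h0 : 0 ≤ t / y := div_nonneg ht.le hy
          have hG := G_nonneg (d := d) h0
          simp only [hH, if_pos hy1]
          positivity
        · simp [hH, hy1]
      have hInt : Integrable (fun x => H |x|) := by
        have heq : (fun x => H |x|)
            = (Set.Icc (-1:ℝ) 1).indicator (fun x => 2^d * G d (t/|x|)) := by
          funext x
          rw [Set.indicator_apply, hH]
          simp only [Set.mem_Icc, ← abs_le]
        rw [heq]
        refine (Measure.integrableOn_of_bounded (M := 2^d) (by simp) ?_ ?_).integrable_indicator
          measurableSet_Icc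
        · exact ((measurable_G d).comp (measurable_const.div measurable_id.abs)).const_mul
            (2^d) |>.aestronglyMeasurable
        · refine ae_of_all _ fun x => ?_
          have h0 : 0 ≤ t / |x| := div_nonneg ht.le (abs_nonneg x)
          rw [Real.norm_eq_abs, abs_of_nonneg (mul_nonneg (by positivity) (G_nonneg h0))]
          calc (2:ℝ)^d * G d (t/|x|) ≤ 2^d * 1 :=
                mul_le_mul_of_nonneg_left (G_le_one h0) (by positivity)
            _ = 2^d := mul_one _
      have hnn : 0 ≤ᵐ[volume] fun x => H |x| := ae_of_all _ fun x => hnnH _ (abs_nonneg x)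
      rw [← ofReal_integral_eq_lintegral_ofReal hInt hnn]
      have hIoi1 : ∀ y ∈ Set.Ioi (1:ℝ), H y = 0 := fun y hy => if_neg (not_le.mpr hy)
      have hIoc : ∀ y ∈ Set.Ioc (0:ℝ) 1, H y = 2^d * G d (t/y) := fun y hy => if_pos hy.2
      have hIocInt : IntegrableOn H (Set.Ioc (0:ℝ) 1) := by
        rw [integrableOn_congr_fun hIoc measurableSet_Ioc]
        exact (integrableOn_G_div d ht measurableSet_Ioc (by simp)
          (fun y hy => hy.1)).const_mul _
      have hIoiInt : IntegrableOn H (Set.Ioi (1:ℝ)) := by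
        rw [integrableOn_congr_fun hIoi1 measurableSet_Ioi]
        exact integrableOn_zero
      have hintval : ∫ x : ℝ, H |x| = 2 * (2^d * Gs (d+1) t) := by
        rw [integral_comp_abs]
        congr 1
        rw [← Set.Ioc_union_Ioi_eq_Ioi (zero_le_one (α := ℝ)),
          setIntegral_union (Set.Ioc_disjoint_Ioi le_rfl) measurableSet_Ioi hIocInt hIoiInt,
          setIntegral_congr_fun measurableSet_Ioi hIoi1, integral_zero, add_zero,
          setIntegral_congr_fun measurableSet_Ioc hIoc, integral_const_mul _ _,
          integral_G_div d ht h1]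
      rw [hintval]
      congr 1
      rw [G, if_neg (not_le.mpr h1)]
      ring

lemma volume_D (d : ℕ) (hd : 2 ≤ d) {n : ℝ} (hn : 1 < n) :
    (volume {u : Fin d → ℝ | (∀ i, |u i| ≤ n) ∧ |∏ i, u i| ≤ n}).toReal
      = 2^d * n * ∑ k ∈ Finset.range d, (((d:ℝ)-1) * Real.log n)^k / (Nat.factorial k) := by
  have hn0 : 0 < n := lt_trans one_pos hn
  have hnd0 : (0:ℝ) < n^d := pow_pos hn0 d
  have hnd : n < n^d := by
    calc n = n^1 := (pow_one n).symm
    _ < n^d := pow_lt_pow_right₀ hn (by omega)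
  set t : ℝ := n / n^d with htdef
  have ht : 0 < t := div_pos hn0 hnd0
  have ht1 : t < 1 := (div_lt_one hnd0).mpr hnd
  have hset : {u : Fin d → ℝ | (∀ i, |u i| ≤ n) ∧ |∏ i, u i| ≤ n}
      = n • {u : Fin d → ℝ | (∀ i, |u i| ≤ 1) ∧ |∏ i, u i| ≤ t} := by
    ext u
    rw [Set.mem_smul_set_iff_inv_smul_mem₀ (ne_of_gt hn0)]
    simp only [Set.mem_setOf_eq, Pi.smul_apply, smul_eq_mul]
    have h1 : ∀ i, (|n⁻¹ * u i| ≤ 1 ↔ |u i| ≤ n) := by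
      intro i
      rw [abs_mul, abs_inv, abs_of_pos hn0, ← div_eq_inv_mul, div_le_one hn0]
    have h2 : |∏ i, (n⁻¹ * u i)| = |∏ i, u i| / n^d := by
      rw [Finset.prod_mul_distrib, Finset.prod_const, Finset.card_univ, Fintype.card_fin,
        abs_mul, abs_pow, abs_inv, abs_of_pos hn0, inv_pow, ← div_eq_inv_mul]
    have h3 : (|∏ i, (n⁻¹ * u i)| ≤ t ↔ |∏ i, u i| ≤ n) := by
      rw [h2, htdef, div_le_div_iff_of_pos_right hnd0]
    rw [forall_congr' h1, h3]
  rw [hset, Measure.addHaar_smul, volume_S d t ht]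
  rw [Module.finrank_pi, Fintype.card_fin]
  rw [abs_of_nonneg (pow_nonneg hn0.le d), ← ENNReal.ofReal_mul (pow_nonneg hn0.le d)]
  rw [ENNReal.toReal_ofReal (mul_nonneg (pow_nonneg hn0.le d) (mul_nonneg (by positivity) (G_nonneg ht.le)))]
  rw [G, if_neg (not_le.mpr ht1), Gs]
  have hlog : Real.log t⁻¹ = ((d:ℝ)-1) * Real.log n := by
    rw [htdef, inv_div, Real.log_div (ne_of_gt hnd0) (ne_of_gt hn0), Real.log_pow]
    ring
  rw [hlog, htdef]
  have hne : n^d ≠ 0 := ne_of_gt hnd0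
  field_simp


/-- asymptotic equivalent of the Lebesgue measure of D_n. -/
theorem volume_Dn_asymptotic
    {d : ℕ} (hd : 2 ≤ d) :
    Tendsto (fun n : ℝ =>
        (volume {u : Fin d → ℝ | (∀ i, |u i| ≤ n) ∧ |∏ i, u i| ≤ n}).toReal
          / ((2 ^ d * ((d : ℝ) - 1) ^ (d - 1) / (Nat.factorial (d - 1)))
              * n * (Real.log n) ^ (d - 1)))
      atTop (nhds 1) := by
  obtain ⟨m, rfl⟩ : ∃ m, d = m + 1 := ⟨d - 1, by omega⟩
  have hm : 1 ≤ m := by omega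
  have hb0 : (0:ℝ) < m := by exact_mod_cast hm
  set a : ℕ → ℝ := fun k => (m:ℝ)^k * (Nat.factorial m) / ((Nat.factorial k) * (m:ℝ)^m) with ha
  have hfm : (Nat.factorial m : ℝ) ≠ 0 := Nat.cast_ne_zero.mpr (Nat.factorial_ne_zero m)
  have ham : a m = 1 := by
    rw [ha]
    have : ((m:ℝ))^m ≠ 0 := by positivity
    field_simp
  have h1 : Tendsto (fun L : ℝ => ∑ k ∈ Finset.range (m+1), a k * (L^(m-k))⁻¹)
      atTop (nhds 1) := by
    have h2 : Tendsto (fun L : ℝ => ∑ k ∈ Finset.range (m+1), a k * (L^(m-k))⁻¹)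
        atTop (nhds (∑ k ∈ Finset.range (m+1), if k = m then 1 else 0)) := by
      apply tendsto_finset_sum
      intro k hk
      by_cases hkm : k = m
      · subst hkm
        simp only [Nat.sub_self, pow_zero, inv_one, mul_one, if_pos]
        simpa [ham] using (tendsto_const_nhds : Tendsto (fun _ : ℝ => a k) atTop (nhds (a k)))
      · have hklt : k < m := by
          have := Finset.mem_range.mp hk; omega
        have h3 : Tendsto (fun L : ℝ => L^(m-k)) atTop atTop :=
          tendsto_pow_atTop (by omega)
        have h5 := h3.inv_tendsto_atTop.const_mul (a k)
        simpa [hkm] using h5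
    simpa using h2
  have h2 : Tendsto (fun n : ℝ => ∑ k ∈ Finset.range (m+1), a k * ((Real.log n)^(m-k))⁻¹)
      atTop (nhds 1) := h1.comp Real.tendsto_log_atTop
  apply Tendsto.congr' ?_ h2
  filter_upwards [eventually_gt_atTop (1:ℝ)] with n hn
  have hL : 0 < Real.log n := Real.log_pos hn
  have hn0 : (0:ℝ) < n := lt_trans one_pos hn
  have hvol := volume_D (m+1) (by omega) hn
  simp only [hvol, Nat.add_sub_cancel, Nat.cast_add, Nat.cast_one, add_sub_cancel_right]
  rw [Finset.mul_sum, Finset.sum_div]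
  refine Finset.sum_congr rfl fun k hk => ?_
  have hkm : k ≤ m := by have := Finset.mem_range.mp hk; omega
  have hLm : (Real.log n)^m = (Real.log n)^(m-k) * (Real.log n)^k := by
    rw [← pow_add, Nat.sub_add_cancel hkm]
  have hfk : (Nat.factorial k : ℝ) ≠ 0 := Nat.cast_ne_zero.mpr (Nat.factorial_ne_zero k)
  rw [ha, mul_pow, hLm]
  field_simp

end ADE
end
end

section
/- Let α > 0, β > 0 and let a, b be real numbers with b > 1 and a ≥ b. Define g(u_1,u_2) = (1 + (b u_1 + a u_2)²)^{−(α+1/2)} (1 + b² u_2²)^{−(β+1/2)} and, for m_1, m_2 > 0, B(m_1,m_2) = ∬_{ℝ² ∖ ([-m_1,m_1]×[-m_2,m_2])} g(u_1,u_2) du_1 du_2. Then for all m_1 ≥ 1 and m_2 ≥ 1, B(m_1,m_2) ≥ ( c_α / (2 β b² (1+b)^{2β}) ) ( m_2^{−2β} + (1/2) m_1^{−2β} ), where c_α = ∫_ℝ (1+z²)^{−(α+1/2)} dz. -/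
open MeasureTheory Real Filter
open scoped BigOperators ENNReal

noncomputable section

namespace ADE

variable {Ω : Type*} [MeasurableSpace Ω] {E : Type*} [MeasurableSpace E]

section AuxBiasLB

open Set

private def g1 (α : ℝ) : ℝ → ℝ := fun z => (1 + z ^ 2) ^ (-(α + 1 / 2))
private def g2 (β b : ℝ) : ℝ → ℝ := fun t => (1 + b ^ 2 * t ^ 2) ^ (-(β + 1 / 2))

private lemma affine_meb {b : ℝ} (hb : 0 < b) (c : ℝ) :
    MeasurableEmbedding (fun t : ℝ => b * t + c) :=
  (affineHomeomorph b c hb.ne').measurableEmbedding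

private lemma map_affine {b : ℝ} (hb : 0 < b) (c : ℝ) :
    Measure.map (fun t : ℝ => b * t + c) volume = ENNReal.ofReal b⁻¹ • volume := by
  have h1 : (fun t : ℝ => b * t + c) = (fun t : ℝ => t + c) ∘ (fun t : ℝ => b * t) := rfl
  rw [h1, ← Measure.map_map (measurable_add_const c) (measurable_const_mul b)]
  have h2 : (fun t : ℝ => b * t) = (b * ·) := rfl
  have h3 : (fun t : ℝ => t + c) = (· + c) := rfl
  rw [h2, Real.map_volume_mul_left hb.ne', Measure.map_smul, h3,
    map_add_right_eq_self volume c, abs_inv, abs_of_pos hb]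

private lemma setIntegral_comp_affine (g : ℝ → ℝ) {b : ℝ} (hb : 0 < b) (c : ℝ) (s : Set ℝ) :
    ∫ t in (fun t : ℝ => b * t + c) ⁻¹' s, g (b * t + c) = b⁻¹ * ∫ z in s, g z := by
  have h := (affine_meb hb c).setIntegral_map (μ := volume) g s
  rw [map_affine hb c, Measure.restrict_smul, integral_smul_measure,
    ENNReal.toReal_ofReal (inv_nonneg.mpr hb.le), smul_eq_mul] at h
  exact h.symm

private lemma integrableOn_comp_affine {g : ℝ → ℝ} {b : ℝ} (hb : 0 < b) (c : ℝ) {s : Set ℝ}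
    (hs : MeasurableSet s) (hg : IntegrableOn g s) :
    IntegrableOn (fun t : ℝ => g (b * t + c)) ((fun t : ℝ => b * t + c) ⁻¹' s) := by
  have hg2 : Integrable g ((Measure.map (fun t : ℝ => b * t + c) volume).restrict s) := by
    rw [map_affine hb c, Measure.restrict_smul]
    exact hg.smul_measure ENNReal.ofReal_ne_top
  rw [Measure.restrict_map ((measurable_const_mul b).add_const c) hs] at hg2
  exact ((affine_meb hb c).integrable_map_iff).mp hg2

private lemma setIntegral_prod_symm'' (f : ℝ × ℝ → ℝ) {s t : Set ℝ}
    (hf : IntegrableOn f (s ×ˢ t) ((volume : Measure ℝ).prod volume)) :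
    ∫ z in s ×ˢ t, f z ∂((volume : Measure ℝ).prod volume)
      = ∫ y in t, ∫ x in s, f (x, y) := by
  simp only [← Measure.prod_restrict s t, IntegrableOn] at hf ⊢
  exact integral_prod_symm f hf

private lemma integrable_g1 {α : ℝ} (hα : 0 < α) : Integrable (g1 α) := by
  have h2 : ((Module.finrank ℝ ℝ : ℕ) : ℝ) < 2 * α + 1 := by
    simp only [Module.finrank_self, Nat.cast_one]; linarith
  have h := integrable_rpow_neg_one_add_norm_sq (E := ℝ) (μ := volume) h2
  refine h.congr (Eventually.of_forall fun x => ?_)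
  show (1 + ‖x‖ ^ 2) ^ (-(2*α+1)/2) = g1 α x
  rw [Real.norm_eq_abs, sq_abs, show -(2*α+1)/2 = -(α + 1/2) by ring]
  rfl

private lemma g1_nonneg (α : ℝ) (z : ℝ) : 0 ≤ g1 α z := rpow_nonneg (by positivity) _
private lemma g2_nonneg (β b : ℝ) (t : ℝ) : 0 ≤ g2 β b t := rpow_nonneg (by positivity) _

private lemma g1_cont (α : ℝ) : Continuous (g1 α) := by
  apply Continuous.rpow_const (by continuity)
  intro z; left; positivity

private lemma g2_cont (β b : ℝ) : Continuous (g2 β b) := by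
  apply Continuous.rpow_const (by continuity)
  intro t; left; positivity

private lemma integrable_g2 {β b : ℝ} (hβ : 0 < β) (hb : 1 ≤ b) : Integrable (g2 β b) := by
  have h2 : ((Module.finrank ℝ ℝ : ℕ) : ℝ) < 2 * β + 1 := by
    simp only [Module.finrank_self, Nat.cast_one]; linarith
  have h := integrable_rpow_neg_one_add_norm_sq (E := ℝ) (μ := volume) h2
  have h3 : Integrable (fun t : ℝ => (1 + t ^ 2) ^ (-(β + 1 / 2))) := by
    refine h.congr (Eventually.of_forall fun x => ?_)
    show (1 + ‖x‖ ^ 2) ^ (-(2*β+1)/2) = (1 + x ^ 2) ^ (-(β + 1/2))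
    rw [Real.norm_eq_abs, sq_abs, show -(2*β+1)/2 = -(β + 1/2) by ring]
  refine h3.mono' ((g2_cont β b).aestronglyMeasurable) (Eventually.of_forall fun t => ?_)
  rw [Real.norm_eq_abs, abs_of_nonneg (g2_nonneg β b t)]
  apply rpow_le_rpow_of_nonpos (by positivity) ?_ (by linarith)
  nlinarith [mul_nonneg (mul_nonneg (sub_nonneg.mpr hb) (by linarith : (0:ℝ) ≤ b + 1)) (sq_nonneg t)]



open Set in
set_option maxHeartbeats 2000000 in
/-- lower bound on the bias term in Example "Ref". -/
theorem bias_lower_bound_example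
    (α β a b : ℝ) (hα : 0 < α) (hβ : 0 < β) (hb : 1 < b) (hab : b ≤ a)
    (m₁ m₂ : ℝ) (hm₁ : 1 ≤ m₁) (hm₂ : 1 ≤ m₂) :
    ((∫ z : ℝ, (1 + z ^ 2) ^ (-(α + 1 / 2)))
        / (2 * β * b ^ 2 * (1 + b) ^ (2 * β)))
      * (m₂ ^ (-(2 * β)) + m₁ ^ (-(2 * β)) / 2)
    ≤ ∫ u : ℝ × ℝ in (Set.Icc (-m₁) m₁ ×ˢ Set.Icc (-m₂) m₂)ᶜ,
        (1 + (b * u.1 + a * u.2) ^ 2) ^ (-(α + 1 / 2))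
          * (1 + b ^ 2 * u.2 ^ 2) ^ (-(β + 1 / 2)) := by
  have hb0 : (0:ℝ) < b := lt_trans one_pos hb
  have ha0 : (0:ℝ) < a := lt_of_lt_of_le hb0 hab
  have hm₁0 : (0:ℝ) < m₁ := lt_of_lt_of_le one_pos hm₁
  have hm₂0 : (0:ℝ) < m₂ := lt_of_lt_of_le one_pos hm₂
  set c : ℝ := ∫ z : ℝ, (1 + z ^ 2) ^ (-(α + 1 / 2)) with hcdef
  have hceq : c = ∫ z : ℝ, g1 α z := rfl
  set f : ℝ × ℝ → ℝ := fun u => g1 α (b * u.1 + a * u.2) * g2 β b u.2 with hfdef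
  show c / (2 * β * b ^ 2 * (1 + b) ^ (2 * β)) * (m₂ ^ (-(2 * β)) + m₁ ^ (-(2 * β)) / 2)
    ≤ ∫ u : ℝ × ℝ in (Set.Icc (-m₁) m₁ ×ˢ Set.Icc (-m₂) m₂)ᶜ, f u
  have h1int : Integrable (g1 α) := integrable_g1 hα
  have Hint : Integrable (g2 β b) := integrable_g2 hβ hb.le
  have fnonneg : ∀ u : ℝ × ℝ, 0 ≤ f u := fun u => mul_nonneg (g1_nonneg _ _) (g2_nonneg _ _ _)
  have hcnonneg : 0 ≤ c := by rw [hceq]; exact integral_nonneg (g1_nonneg α)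
  -- whole-line affine integral of g1
  have haffInt : ∀ y : ℝ, Integrable (fun x : ℝ => g1 α (b * x + y)) := by
    intro y
    have h := integrableOn_comp_affine (g := g1 α) hb0 y (s := univ) MeasurableSet.univ
      h1int.integrableOn
    rwa [preimage_univ, integrableOn_univ] at h
  have haff : ∀ y : ℝ, (∫ x : ℝ, g1 α (b * x + y)) = b⁻¹ * c := by
    intro y
    have h := setIntegral_comp_affine (g1 α) hb0 y univ
    rw [preimage_univ] at h
    simpa [hceq] using h
  -- global integrability of f
  have fint : Integrable f ((volume : Measure ℝ).prod volume) := by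
    have hmeas : AEStronglyMeasurable f ((volume : Measure ℝ).prod volume) := by
      have : Continuous f := by
        apply Continuous.mul
        · exact (g1_cont α).comp
            ((continuous_const.mul continuous_fst).add (continuous_const.mul continuous_snd))
        · exact (g2_cont β b).comp continuous_snd
      exact this.aestronglyMeasurable
    refine (integrable_prod_iff' hmeas).mpr ⟨?_, ?_⟩
    · exact Eventually.of_forall fun y => (haffInt (a * y)).mul_const (g2 β b y)
    · have heq : (fun y : ℝ => ∫ x, ‖f (x, y)‖) = fun y => (b⁻¹ * c) * g2 β b y := by
        funext y
        have : ∀ x : ℝ, ‖f (x, y)‖ = g1 α (b * x + a * y) * g2 β b y := by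
          intro x
          rw [Real.norm_eq_abs, abs_of_nonneg (fnonneg (x, y))]
        simp only [this]
        rw [integral_mul_const, haff]
      rw [heq]
      exact (Hint.const_mul _)
  have fintV : Integrable f (volume : Measure (ℝ × ℝ)) := by
    rwa [Measure.volume_eq_prod]
  -- half of c
  have hIic0 : ∫ z in Iic (0:ℝ), g1 α z = c / 2 := by
    have heven : ∫ z in Iic (0:ℝ), g1 α z = ∫ z in Ioi (0:ℝ), g1 α z := by
      have h := integral_comp_neg_Iic (0:ℝ) (g1 α)
      rw [neg_zero] at h
      rw [← h]
      refine setIntegral_congr_fun measurableSet_Iic fun x _ => ?_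
      show g1 α x = g1 α (-x)
      unfold g1
      rw [neg_pow, show ((-1:ℝ))^2 = 1 by norm_num, one_mul]
    have hsum : (∫ z in Iic (0:ℝ), g1 α z) + ∫ z in Ioi (0:ℝ), g1 α z = c := by
      rw [hceq]
      exact intervalIntegral.integral_Iic_add_Ioi h1int.integrableOn h1int.integrableOn
    linarith [heven, hsum]
  -- tail bound for g2
  have htail : ∀ x : ℝ, 0 ≤ x →
      (1 + b * x) ^ (-(2 * β)) / (2 * β * b) ≤ ∫ t in Ioi x, g2 β b t := by
    intro x hx
    have hx1 : 0 < b * x + 1 := by positivity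
    have hexp : -(2 * β + 1) < -1 := by linarith
    have hpre : (fun t : ℝ => b * t + 1) ⁻¹' (Ioi (b * x + 1)) = Ioi x := by
      ext t
      simp only [mem_preimage, mem_Ioi, add_lt_add_iff_right]
      exact mul_lt_mul_iff_right₀ hb0
    have hInt2 : IntegrableOn (fun t : ℝ => (b * t + 1) ^ (-(2 * β + 1))) (Ioi x) := by
      have h := integrableOn_comp_affine (g := fun z : ℝ => z ^ (-(2 * β + 1))) hb0 1
        measurableSet_Ioi (integrableOn_Ioi_rpow_of_lt hexp hx1)
      rwa [hpre] at h
    have hval : ∫ t in Ioi x, (b * t + 1) ^ (-(2 * β + 1))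
        = (1 + b * x) ^ (-(2 * β)) / (2 * β * b) := by
      have h := setIntegral_comp_affine (fun z : ℝ => z ^ (-(2 * β + 1))) hb0 1 (Ioi (b * x + 1))
      rw [hpre] at h
      rw [h, integral_Ioi_rpow_of_lt hexp hx1, show -(2 * β + 1) + 1 = -(2 * β) by ring,
        show (1:ℝ) + b * x = b * x + 1 by ring]
      have h2β : (2 * β) ≠ 0 := by positivity
      generalize (b * x + 1) ^ (-(2 * β)) = A
      rw [neg_div_neg_eq, inv_mul_eq_div, div_mul_eq_div_div]
      ring
    rw [← hval]
    refine setIntegral_mono_on hInt2 Hint.integrableOn measurableSet_Ioi fun t ht => ?_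
    have ht0 : 0 ≤ t := le_trans hx (le_of_lt ht)
    have hbt : 0 < b * t + 1 := by positivity
    have hsq : (b * t + 1) ^ (-(2 * β + 1)) = ((b * t + 1) ^ 2) ^ (-(β + 1 / 2)) := by
      rw [← Real.rpow_natCast (b * t + 1) 2, ← Real.rpow_mul hbt.le]
      congr 1
      push_cast
      ring
    rw [hsq]
    apply rpow_le_rpow_of_nonpos (by positivity) ?_ (by linarith)
    show (1 : ℝ) + b ^ 2 * t ^ 2 ≤ (b * t + 1) ^ 2
    nlinarith [mul_nonneg hb0.le ht0]
  -- the regions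
  set S₁ : Set ℝ := {x : ℝ | m₁ < |x|} with hS₁def
  set S₂ : Set ℝ := {y : ℝ | m₂ < |y|} with hS₂def
  set w : ℝ := b * m₁ / a with hwdef
  have hw0 : 0 < w := by positivity
  have hwm₁ : w ≤ m₁ := by
    rw [hwdef, div_le_iff₀ ha0]
    nlinarith
  set T : Set ℝ := Ioc w m₂ with hTdef
  have hS₁m : MeasurableSet S₁ := (isOpen_lt continuous_const continuous_abs).measurableSet
  have hS₂m : MeasurableSet S₂ := (isOpen_lt continuous_const continuous_abs).measurableSet
  set E₁ : Set (ℝ × ℝ) := univ ×ˢ S₂ with hE₁def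
  set E₂ : Set (ℝ × ℝ) := S₁ ×ˢ T with hE₂def
  -- step 1 : splitting
  have hstep1 : (∫ u in E₁, f u) + (∫ u in E₂, f u)
      ≤ ∫ u : ℝ × ℝ in (Set.Icc (-m₁) m₁ ×ˢ Set.Icc (-m₂) m₂)ᶜ, f u := by
    have hdisj : Disjoint E₁ E₂ := by
      rw [Set.disjoint_left]
      rintro ⟨x, y⟩ ⟨-, h2⟩ ⟨-, h4⟩
      simp only [hS₂def, mem_setOf_eq] at h2
      have h5 : y ≤ m₂ := h4.2
      have h6 : w < y := h4.1
      rw [abs_of_pos (lt_trans hw0 h6)] at h2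
      linarith
    have hsub : E₁ ∪ E₂ ⊆ (Set.Icc (-m₁) m₁ ×ˢ Set.Icc (-m₂) m₂)ᶜ := by
      rintro ⟨x, y⟩ hu hmem
      simp only [Set.mem_prod, Set.mem_Icc] at hmem
      rcases hu with h | h
      · have h2 : (x, y).2 ∈ S₂ := h.2
        simp only [hS₂def, mem_setOf_eq] at h2
        have h3 : |y| ≤ m₂ := abs_le.mpr ⟨hmem.2.1, hmem.2.2⟩
        linarith
      · have h2 : (x, y).1 ∈ S₁ := h.1
        simp only [hS₁def, mem_setOf_eq] at h2
        have h3 : |x| ≤ m₁ := abs_le.mpr ⟨hmem.1.1, hmem.1.2⟩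
        linarith
    calc (∫ u in E₁, f u) + (∫ u in E₂, f u)
        = ∫ u in E₁ ∪ E₂, f u := by
          exact (setIntegral_union hdisj (hS₁m.prod measurableSet_Ioc)
            fintV.integrableOn fintV.integrableOn).symm
      _ ≤ _ := by
          refine setIntegral_mono_set fintV.integrableOn
            (Eventually.of_forall fun u => fnonneg u) (HasSubset.Subset.eventuallyLE hsub)
  -- Step 2 : value over E₁
  have hE₁ : ∫ u in E₁, f u = b⁻¹ * c * (2 * ∫ t in Ioi m₂, g2 β b t) := by
    rw [Measure.volume_eq_prod, hE₁def,
      setIntegral_prod_symm'' f (by rw [← Measure.volume_eq_prod]; exact fintV.integrableOn)]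
    have hinner : ∀ y ∈ S₂, (∫ x in univ, f (x, y)) = b⁻¹ * c * g2 β b y := by
      intro y _
      rw [Measure.restrict_univ]
      calc (∫ x : ℝ, f (x, y)) = ∫ x : ℝ, g1 α (b * x + a * y) * g2 β b y := by
            simp only [hfdef]
        _ = (∫ x : ℝ, g1 α (b * x + a * y)) * g2 β b y := integral_mul_const _ _
        _ = b⁻¹ * c * g2 β b y := by rw [haff]
    rw [setIntegral_congr_fun hS₂m hinner, integral_const_mul]
    have hset : S₂ = Iio (-m₂) ∪ Ioi m₂ := by
      ext y
      simp only [hS₂def, mem_setOf_eq, mem_union, mem_Iio, mem_Ioi, lt_abs, lt_neg]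
      tauto
    have hneg : ∫ y in Iio (-m₂), g2 β b y = ∫ t in Ioi m₂, g2 β b t := by
      rw [← integral_Iic_eq_integral_Iio]
      have h := integral_comp_neg_Iic (-m₂) (g2 β b)
      rw [neg_neg] at h
      rw [← h]
      refine setIntegral_congr_fun measurableSet_Iic fun x _ => ?_
      show g2 β b x = g2 β b (-x)
      unfold g2
      rw [neg_sq]
    have hdisj2 : Disjoint (Iio (-m₂)) (Ioi m₂) := by
      rw [Set.disjoint_left]
      intro y h1 h2
      simp only [mem_Iio] at h1
      simp only [mem_Ioi] at h2
      linarith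
    rw [hset, setIntegral_union hdisj2 measurableSet_Ioi Hint.integrableOn Hint.integrableOn,
      hneg]
    ring
  -- Step 3 : lower bound over E₂
  have hE₂ : c / (2 * b) * ∫ t in T, g2 β b t ≤ ∫ u in E₂, f u := by
    rw [Measure.volume_eq_prod, hE₂def,
      setIntegral_prod_symm'' f (by rw [← Measure.volume_eq_prod]; exact fintV.integrableOn)]
    have hInnerInt : IntegrableOn (fun y => ∫ x in S₁, f (x, y)) T := by
      have h2 : IntegrableOn f (S₁ ×ˢ T) ((volume : Measure ℝ).prod volume) := by
        rw [← Measure.volume_eq_prod]; exact fintV.integrableOn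
      rw [IntegrableOn, ← Measure.prod_restrict] at h2
      exact h2.integral_prod_right
    calc c / (2 * b) * ∫ t in T, g2 β b t = ∫ y in T, c / (2 * b) * g2 β b y := by
          rw [integral_const_mul]
      _ ≤ ∫ y in T, ∫ x in S₁, f (x, y) := by
          refine setIntegral_mono_on (Hint.integrableOn.const_mul _) hInnerInt
            measurableSet_Ioc fun y hy => ?_
          have hy1 : w < y := hy.1
          have hy0 : 0 < y := lt_trans hw0 hy1
          have hay : b * m₁ < a * y := by
            rw [hwdef, div_lt_iff₀ ha0] at hy1
            linarith
          have hkey : b⁻¹ * (c / 2) ≤ ∫ x in S₁, g1 α (b * x + a * y) := by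
            have hpre2 : (fun t : ℝ => b * t + a * y) ⁻¹' (Iio (b * (-m₁) + a * y))
                = Iio (-m₁) := by
              ext t
              simp only [mem_preimage, mem_Iio, add_lt_add_iff_right]
              exact mul_lt_mul_iff_right₀ hb0
            have hIio : ∫ x in Iio (-m₁), g1 α (b * x + a * y)
                = b⁻¹ * ∫ z in Iio (b * (-m₁) + a * y), g1 α z := by
              rw [← hpre2]
              exact setIntegral_comp_affine (g1 α) hb0 (a * y) _
            have hmono2 : ∫ z in Iic 0, g1 α z ≤ ∫ z in Iio (b * (-m₁) + a * y), g1 α z := by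
              refine setIntegral_mono_set h1int.integrableOn
                (Eventually.of_forall (g1_nonneg α)) (HasSubset.Subset.eventuallyLE ?_)
              intro z hz
              simp only [mem_Iic] at hz
              simp only [mem_Iio]
              have h0 : 0 < b * (-m₁) + a * y := by nlinarith
              linarith
            have hmono3 : ∫ x in Iio (-m₁), g1 α (b * x + a * y)
                ≤ ∫ x in S₁, g1 α (b * x + a * y) := by
              refine setIntegral_mono_set (haffInt (a * y)).integrableOn
                (Eventually.of_forall fun x => g1_nonneg α _)
                (HasSubset.Subset.eventuallyLE ?_)
              intro x hx
              simp only [mem_Iio] at hx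
              simp only [hS₁def, mem_setOf_eq]
              rw [abs_of_neg (by linarith : x < 0)]
              linarith
            calc b⁻¹ * (c / 2) = b⁻¹ * ∫ z in Iic 0, g1 α z := by rw [hIic0]
              _ ≤ b⁻¹ * ∫ z in Iio (b * (-m₁) + a * y), g1 α z :=
                  mul_le_mul_of_nonneg_left hmono2 (inv_nonneg.mpr hb0.le)
              _ = ∫ x in Iio (-m₁), g1 α (b * x + a * y) := hIio.symm
              _ ≤ _ := hmono3
          calc c / (2 * b) * g2 β b y = (b⁻¹ * (c / 2)) * g2 β b y := by ring
            _ ≤ (∫ x in S₁, g1 α (b * x + a * y)) * g2 β b y :=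
                mul_le_mul_of_nonneg_right hkey (g2_nonneg β b y)
            _ = ∫ x in S₁, f (x, y) := by
                simp only [hfdef]
                exact (integral_mul_const _ _).symm
  -- final assembly
  set J2 : ℝ := ∫ t in Ioi m₂, g2 β b t with hJ2def
  set I : ℝ := ∫ t in T, g2 β b t with hIdef
  have hJ2nonneg : 0 ≤ J2 := by
    rw [hJ2def]
    exact setIntegral_nonneg measurableSet_Ioi fun t _ => g2_nonneg β b t
  have hInonneg : 0 ≤ I := by
    rw [hIdef, hTdef]
    exact setIntegral_nonneg measurableSet_Ioc fun t _ => g2_nonneg β b t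
  have htotal : b⁻¹ * c * (2 * J2) + c / (2 * b) * I
      ≤ ∫ u : ℝ × ℝ in (Set.Icc (-m₁) m₁ ×ˢ Set.Icc (-m₂) m₂)ᶜ, f u :=
    le_trans (add_le_add (le_of_eq hE₁.symm) hE₂) hstep1
  refine le_trans ?_ htotal
  clear_value J2 I c f w T S₁ S₂ E₁ E₂
  clear htotal hstep1 hE₁ hE₂ fint fintV haff haffInt hIic0 fnonneg h1int hcdef hceq hfdef
  set D : ℝ := (1 + b) ^ (2 * β) with hDdef
  have hD0 : 0 < D := by
    rw [hDdef]
    exact rpow_pos_of_pos (by linarith) _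
  set p1 : ℝ := m₁ ^ (-(2 * β)) with hp1def
  set p2 : ℝ := m₂ ^ (-(2 * β)) with hp2def
  have hp1nonneg : 0 ≤ p1 := by rw [hp1def]; exact rpow_nonneg hm₁0.le _
  have hp2nonneg : 0 ≤ p2 := by rw [hp2def]; exact rpow_nonneg hm₂0.le _
  clear_value D p1 p2
  have hbound : ∀ m : ℝ, 1 ≤ m → ∀ x : ℝ, 0 ≤ x → 1 + b * x ≤ (1 + b) * m →
      m ^ (-(2 * β)) / D ≤ (1 + b * x) ^ (-(2 * β)) := by
    intro m hm x hx hle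
    have h1x : (0:ℝ) < 1 + b * x := by positivity
    have h2 : ((1 + b) * m) ^ (-(2 * β)) ≤ (1 + b * x) ^ (-(2 * β)) :=
      rpow_le_rpow_of_nonpos h1x hle (by linarith)
    calc m ^ (-(2 * β)) / D = ((1 + b) * m) ^ (-(2 * β)) := by
          rw [Real.mul_rpow (by linarith) (by linarith : (0:ℝ) ≤ m), hDdef,
            Real.rpow_neg (by linarith : (0:ℝ) ≤ 1 + b)]
          ring
      _ ≤ _ := h2
  have hX : p2 / D / (2 * β * b) ≤ J2 := by
    have h := htail m₂ hm₂0.le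
    have hm2b : 1 + b * m₂ ≤ (1 + b) * m₂ := by nlinarith
    have h2 := hbound m₂ hm₂ m₂ hm₂0.le hm2b
    rw [← hp2def] at h2
    calc p2 / D / (2 * β * b) ≤ (1 + b * m₂) ^ (-(2 * β)) / (2 * β * b) := by
          gcongr
      _ ≤ J2 := by rw [hJ2def]; exact h
  have hkey2 : p2 / D / (2 * β * b) * 2 + p1 / D / (2 * β * b) ≤ 4 * J2 + I := by
    by_cases hcase : w ≤ m₂
    · have hY : p1 / D / (2 * β * b) ≤ I + J2 := by
        have hJw := htail w hw0.le
        have hIoiW : ∫ t in Ioi w, g2 β b t = I + J2 := by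
          rw [hIdef, hJ2def, hTdef, ← setIntegral_union (Set.Ioc_disjoint_Ioi le_rfl)
            measurableSet_Ioi Hint.integrableOn Hint.integrableOn,
            Set.Ioc_union_Ioi_eq_Ioi hcase]
        have hbw : 1 + b * w ≤ (1 + b) * m₁ := by
          have h3 : b * w ≤ b * m₁ := mul_le_mul_of_nonneg_left hwm₁ hb0.le
          nlinarith
        have h2 := hbound m₁ hm₁ w hw0.le hbw
        rw [← hp1def] at h2
        calc p1 / D / (2 * β * b) ≤ (1 + b * w) ^ (-(2 * β)) / (2 * β * b) := by
              gcongr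
          _ ≤ ∫ t in Ioi w, g2 β b t := hJw
          _ = I + J2 := hIoiW
      linarith
    · have hIzero : I = 0 := by
        rw [hIdef, hTdef, Set.Ioc_eq_empty (by linarith [not_le.mp hcase]),
          Measure.restrict_empty, integral_zero_measure]
      have hm12 : m₂ ≤ m₁ := le_trans (not_le.mp hcase).le hwm₁
      have hp12 : p1 ≤ p2 := by
        rw [hp1def, hp2def]
        exact rpow_le_rpow_of_nonpos hm₂0 hm12 (by linarith)
      have h3 : p1 / D / (2 * β * b) ≤ p2 / D / (2 * β * b) := by gcongr
      linarith
  have heqT : c / (2 * β * b ^ 2 * D) * (p2 + p1 / 2)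
      = c / (2 * b) * (p2 / D / (2 * β * b) * 2 + p1 / D / (2 * β * b)) := by
    field_simp
  calc c / (2 * β * b ^ 2 * D) * (p2 + p1 / 2)
      = c / (2 * b) * (p2 / D / (2 * β * b) * 2 + p1 / D / (2 * β * b)) := heqT
    _ ≤ c / (2 * b) * (4 * J2 + I) := by
        exact mul_le_mul_of_nonneg_left hkey2 (div_nonneg hcnonneg (by positivity))
    _ = b⁻¹ * c * (2 * J2) + c / (2 * b) * I := by ring


end AuxBiasLB

end ADE
end
end

section
/- Let X and Y be complex-valued random variables on a common probability space that are almost surely bounded, with essential supremum norms ‖X‖_∞ and ‖Y‖_∞ of |X| and |Y|. Then |E[XY] − E[X]E[Y]| ≤ 4 α(σ(X), σ(Y)) ‖X‖_∞ ‖Y‖_∞. -/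
open MeasureTheory Real Filter
open scoped BigOperators ENNReal

noncomputable section

namespace ADE

variable {Ω : Type*} [MeasurableSpace Ω] {E : Type*} [MeasurableSpace E]

section AuxCov

variable {Ω' : Type*} {m0 : MeasurableSpace Ω'}

lemma toReal_prob_le_one (P : Measure Ω') [IsProbabilityMeasure P] (S : Set Ω') :
    (P S).toReal ≤ 1 := by
  have hle : P S ≤ 1 := by
    have h := measure_mono (μ := P) (Set.subset_univ S)
    rwa [IsProbabilityMeasure.measure_univ (μ := P)] at h
  simpa using ENNReal.toReal_mono ENNReal.one_ne_top hle

lemma indicator_integrable (P : Measure Ω') [IsFiniteMeasure P] {A : Set Ω'}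
    (hA : MeasurableSet[m0] A) : Integrable (A.indicator (fun _ => (1:ℝ))) P :=
  (integrable_const (1:ℝ)).indicator hA

lemma indicator_integral (P : Measure Ω') {A : Set Ω'} (hA : MeasurableSet[m0] A) :
    ∫ ω, A.indicator (fun _ => (1:ℝ)) ω ∂P = (P A).toReal := by
  exact integral_indicator_one (μ := P) hA

lemma alpha_bddAbove (P : Measure Ω') [IsProbabilityMeasure P] (F G : MeasurableSpace Ω') :
    BddAbove {x | ∃ A B : Set Ω', MeasurableSet[F] A ∧ MeasurableSet[G] B ∧
      x = |(P (A ∩ B)).toReal - (P A).toReal * (P B).toReal|} := by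
  refine ⟨1, ?_⟩
  rintro x ⟨A, B, -, -, rfl⟩
  have h1 := toReal_prob_le_one P A
  have q := toReal_prob_le_one P B
  have h3 := toReal_prob_le_one P (A ∩ B)
  have h0 : ∀ S : Set Ω', 0 ≤ (P S).toReal := fun S => ENNReal.toReal_nonneg
  rw [abs_le]
  constructor
  · nlinarith [h0 A, h0 B, h0 (A ∩ B)]
  · nlinarith [h0 A, h0 B, h0 (A ∩ B)]

lemma alphaDep_nonneg (P : Measure Ω') [IsProbabilityMeasure P] (F G : MeasurableSpace Ω') :
    0 ≤ @alphaDep Ω' m0 P F G := by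
  have h0 : (0 : ℝ) ∈ {x | ∃ A B : Set Ω', MeasurableSet[F] A ∧ MeasurableSet[G] B ∧
      x = |(P (A ∩ B)).toReal - (P A).toReal * (P B).toReal|} :=
    ⟨∅, ∅, @MeasurableSet.empty Ω' F, @MeasurableSet.empty Ω' G, by simp⟩
  have := le_csSup (alpha_bddAbove P F G) h0
  unfold alphaDep; linarith

lemma abs_cov_le_alpha (P : Measure Ω') [IsProbabilityMeasure P]
    {F G : MeasurableSpace Ω'} {A B : Set Ω'}
    (hA : MeasurableSet[F] A) (hB : MeasurableSet[G] B) :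
    |(P (A ∩ B)).toReal - (P A).toReal * (P B).toReal| ≤ @alphaDep Ω' m0 P F G / 2 := by
  have := le_csSup (alpha_bddAbove P F G) (Set.mem_setOf.mpr ⟨A, B, hA, hB, rfl⟩)
  unfold alphaDep; linarith

/-- Covariance bound for ±1 valued functions. -/
lemma cov_pm_le (P : Measure Ω') [IsProbabilityMeasure P]
    {F G : MeasurableSpace Ω'} (hF : F ≤ m0) (hG : G ≤ m0) {s t : Ω' → ℝ}
    (hsm : StronglyMeasurable[F] s) (htm : StronglyMeasurable[G] t)
    (hsval : ∀ ω, s ω = 1 ∨ s ω = -1) (htval : ∀ ω, t ω = 1 ∨ t ω = -1) :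
    |(∫ ω, s ω * t ω ∂P) - (∫ ω, s ω ∂P) * ∫ ω, t ω ∂P| ≤ 2 * @alphaDep Ω' m0 P F G := by
  set A : Set Ω' := s ⁻¹' {1} with hA
  set B : Set Ω' := t ⁻¹' {1} with hB
  have hAF : MeasurableSet[F] A := hsm.measurable (measurableSet_singleton 1)
  have hBG : MeasurableSet[G] B := htm.measurable (measurableSet_singleton 1)
  have hAm : MeasurableSet[m0] A := hF A hAF
  have hBm : MeasurableSet[m0] B := hG B hBG
  set u : Ω' → ℝ := A.indicator (fun _ => (1:ℝ)) with hu
  set v : Ω' → ℝ := B.indicator (fun _ => (1:ℝ)) with hv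
  set w : Ω' → ℝ := (A ∩ B).indicator (fun _ => (1:ℝ)) with hw
  have hseq : ∀ ω, s ω = 2 * u ω - 1 := by
    intro ω
    by_cases h : ω ∈ A
    · have h1 : s ω = 1 := h
      rw [hu, Set.indicator_of_mem h, h1]; norm_num
    · have h1 : s ω = -1 := (hsval ω).resolve_left h
      rw [hu, Set.indicator_of_notMem h, h1]; norm_num
  have hteq : ∀ ω, t ω = 2 * v ω - 1 := by
    intro ω
    by_cases h : ω ∈ B
    · have h1 : t ω = 1 := h
      rw [hv, Set.indicator_of_mem h, h1]; norm_num
    · have h1 : t ω = -1 := (htval ω).resolve_left h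
      rw [hv, Set.indicator_of_notMem h, h1]; norm_num
  have hIA : Integrable u P := indicator_integrable P hAm
  have hIB : Integrable v P := indicator_integrable P hBm
  have hIAB : Integrable w P := indicator_integrable P (hAm.inter hBm)
  have hiA : ∫ ω, u ω ∂P = (P A).toReal := by
    simpa [hu] using indicator_integral P hAm
  have hiB : ∫ ω, v ω ∂P = (P B).toReal := by
    simpa [hv] using indicator_integral P hBm
  have hiAB : ∫ ω, w ω ∂P = (P (A ∩ B)).toReal := by
    simpa [hw] using indicator_integral P (hAm.inter hBm)
  have hprod : ∀ ω, s ω * t ω = 4 * w ω - 2 * u ω - 2 * v ω + 1 := by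
    intro ω
    rw [hseq ω, hteq ω]
    by_cases hA' : ω ∈ A <;> by_cases hB' : ω ∈ B <;>
      simp [hu, hv, hw, Set.indicator_of_mem, Set.indicator_of_notMem, hA', hB',
        Set.mem_inter_iff] <;> ring
  have hs_int : ∫ ω, s ω ∂P = 2 * (P A).toReal - 1 := by
    have h1 : ∫ ω, s ω ∂P = ∫ ω, (2 * u ω - 1) ∂P :=
      integral_congr_ae (Filter.Eventually.of_forall hseq)
    rw [h1, integral_sub (hIA.const_mul 2) (integrable_const 1),
      integral_const_mul, hiA]
    simp
  have ht_int : ∫ ω, t ω ∂P = 2 * (P B).toReal - 1 := by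
    have h1 : ∫ ω, t ω ∂P = ∫ ω, (2 * v ω - 1) ∂P :=
      integral_congr_ae (Filter.Eventually.of_forall hteq)
    rw [h1, integral_sub (hIB.const_mul 2) (integrable_const 1),
      integral_const_mul, hiB]
    simp
  have hK1 : Integrable (fun ω => 4 * w ω - 2 * u ω) P :=
    (hIAB.const_mul 4).sub (hIA.const_mul 2)
  have hK2 : Integrable (fun ω => 4 * w ω - 2 * u ω - 2 * v ω) P :=
    hK1.sub (hIB.const_mul 2)
  have hst_int : ∫ ω, s ω * t ω ∂P =
      4 * (P (A ∩ B)).toReal - 2 * (P A).toReal - 2 * (P B).toReal + 1 := by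
    have h1 : ∫ ω, s ω * t ω ∂P = ∫ ω, (4 * w ω - 2 * u ω - 2 * v ω + 1) ∂P :=
      integral_congr_ae (Filter.Eventually.of_forall hprod)
    rw [h1, integral_add hK2 (integrable_const 1),
      integral_sub hK1 (hIB.const_mul 2),
      integral_sub (hIAB.const_mul 4) (hIA.const_mul 2),
      integral_const_mul, integral_const_mul, integral_const_mul, hiA, hiB, hiAB]
    simp
  rw [hs_int, ht_int, hst_int]
  have key : 4 * (P (A ∩ B)).toReal - 2 * (P A).toReal - 2 * (P B).toReal + 1
      - (2 * (P A).toReal - 1) * (2 * (P B).toReal - 1)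
      = 4 * ((P (A ∩ B)).toReal - (P A).toReal * (P B).toReal) := by ring
  rw [key, abs_mul, abs_of_nonneg (by norm_num : (0:ℝ) ≤ 4)]
  have := abs_cov_le_alpha (m0 := m0) P hAF hBG
  linarith

lemma sign_step (P : Measure Ω') [IsProbabilityMeasure P]
    {m : MeasurableSpace Ω'} (hm : m ≤ m0) {f h : Ω' → ℝ} {a : ℝ}
    (hf : StronglyMeasurable[m] f) (hfa : ∀ᵐ ω ∂P, |f ω| ≤ a)
    (hh : Integrable h P) :
    ∃ s : Ω' → ℝ, StronglyMeasurable[m] s ∧ (∀ ω, s ω = 1 ∨ s ω = -1) ∧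
      |∫ ω, f ω * h ω ∂P| ≤ a * ∫ ω, s ω * h ω ∂P := by
  have ha : 0 ≤ a := by
    obtain ⟨ω, hω⟩ := hfa.exists
    exact (abs_nonneg _).trans hω
  set g : Ω' → ℝ := P[h|m] with hg
  have hgm : StronglyMeasurable[m] g := stronglyMeasurable_condExp
  have hgi : Integrable g P := integrable_condExp
  set s : Ω' → ℝ := fun ω => if 0 ≤ g ω then 1 else -1 with hs
  have hsm : StronglyMeasurable[m] s := by
    have : Measurable[m] s := by
      refine Measurable.ite ?_ measurable_const measurable_const
      exact measurableSet_le measurable_const hgm.measurable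
    exact this.stronglyMeasurable
  have hsval : ∀ ω, s ω = 1 ∨ s ω = -1 := by
    intro ω; by_cases h0 : 0 ≤ g ω <;> simp [hs, h0]
  have hsabs : ∀ ω, s ω * g ω = |g ω| := by
    intro ω
    by_cases h0 : 0 ≤ g ω
    · simp [hs, h0, abs_of_nonneg h0]
    · simp [hs, h0, abs_of_neg (lt_of_not_ge h0)]
  have hfm0 : AEStronglyMeasurable[m0] f P := (hf.mono hm).aestronglyMeasurable
  have hfa' : ∀ᵐ ω ∂P, ‖f ω‖ ≤ a := hfa
  have hfh : Integrable (fun ω => f ω * h ω) P := hh.bdd_mul hfm0 hfa'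
  have hfg : Integrable (fun ω => f ω * g ω) P := hgi.bdd_mul hfm0 hfa'
  -- ∫ f h = ∫ f g
  have key1 : ∫ ω, f ω * h ω ∂P = ∫ ω, f ω * g ω ∂P := by
    have h1 : P[f * h|m] =ᵐ[P] f * g :=
      condExp_stronglyMeasurable_mul_of_bound hm hf hh a hfa'
    calc ∫ ω, f ω * h ω ∂P = ∫ ω, (P[f * h|m]) ω ∂P := (integral_condExp hm).symm
      _ = ∫ ω, (f * g) ω ∂P := integral_congr_ae h1
      _ = ∫ ω, f ω * g ω ∂P := rfl
  have key2 : ∫ ω, s ω * h ω ∂P = ∫ ω, s ω * g ω ∂P := by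
    have h1 : P[s * h|m] =ᵐ[P] s * g :=
      condExp_stronglyMeasurable_mul_of_bound hm hsm hh 1
        (Filter.Eventually.of_forall fun ω => by rcases hsval ω with h | h <;> simp [h])
    calc ∫ ω, s ω * h ω ∂P = ∫ ω, (P[s * h|m]) ω ∂P := (integral_condExp hm).symm
      _ = ∫ ω, (s * g) ω ∂P := integral_congr_ae h1
      _ = ∫ ω, s ω * g ω ∂P := rfl
  refine ⟨s, hsm, hsval, ?_⟩
  rw [key1, key2]
  have : ∫ ω, s ω * g ω ∂P = ∫ ω, |g ω| ∂P := by
    simp_rw [hsabs]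
  rw [this]
  calc |∫ ω, f ω * g ω ∂P| ≤ ∫ ω, |f ω * g ω| ∂P := by
        simpa [abs_mul] using norm_integral_le_integral_norm (fun ω => f ω * g ω) (μ := P)
    _ ≤ ∫ ω, a * |g ω| ∂P := by
        refine integral_mono_ae hfg.abs (hgi.abs.const_mul a) ?_
        filter_upwards [hfa] with ω hω
        simp only [Pi.abs_apply, abs_mul]
        exact mul_le_mul_of_nonneg_right hω (abs_nonneg _)
    _ = a * ∫ ω, |g ω| ∂P := integral_const_mul a _

lemma integrable_of_bound (P : Measure Ω') [IsFiniteMeasure P] {f : Ω' → ℝ} {a : ℝ}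
    (hf : AEStronglyMeasurable f P) (hfa : ∀ᵐ ω ∂P, |f ω| ≤ a) : Integrable f P :=
  (integrable_const a).mono' hf hfa

/-- Real covariance bound. -/
lemma cov_real (P : Measure Ω') [IsProbabilityMeasure P]
    {F G : MeasurableSpace Ω'} (hF : F ≤ m0) (hG : G ≤ m0) {f g : Ω' → ℝ} {a b : ℝ}
    (hf : StronglyMeasurable[F] f) (hg : StronglyMeasurable[G] g)
    (hfa : ∀ᵐ ω ∂P, |f ω| ≤ a) (hgb : ∀ᵐ ω ∂P, |g ω| ≤ b) :
    |(∫ ω, f ω * g ω ∂P) - (∫ ω, f ω ∂P) * ∫ ω, g ω ∂P|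
      ≤ 2 * @alphaDep Ω' m0 P F G * a * b := by
  have ha : 0 ≤ a := by obtain ⟨ω, hω⟩ := hfa.exists; exact (abs_nonneg _).trans hω
  have hb : 0 ≤ b := by obtain ⟨ω, hω⟩ := hgb.exists; exact (abs_nonneg _).trans hω
  have hfm0 : AEStronglyMeasurable[m0] f P := (hf.mono hF).aestronglyMeasurable
  have hgm0 : AEStronglyMeasurable[m0] g P := (hg.mono hG).aestronglyMeasurable
  have hfi : Integrable f P := integrable_of_bound P hfm0 hfa
  have hgi : Integrable g P := integrable_of_bound P hgm0 hgb
  -- step 1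
  set h : Ω' → ℝ := fun ω => g ω - ∫ ω, g ω ∂P with hh_def
  have hhi : Integrable h P := hgi.sub (integrable_const _)
  have hfg : Integrable (fun ω => f ω * g ω) P := hgi.bdd_mul hfm0 hfa
  have hfh : ∫ ω, f ω * h ω ∂P = (∫ ω, f ω * g ω ∂P) - (∫ ω, f ω ∂P) * ∫ ω, g ω ∂P := by
    have e : ∀ ω, f ω * h ω = f ω * g ω - (∫ ω, g ω ∂P) * f ω := fun ω => by
      simp [hh_def]; ring
    rw [integral_congr_ae (Filter.Eventually.of_forall e),
      integral_sub hfg (hfi.const_mul _), integral_const_mul]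
    ring
  obtain ⟨s, hsm, hsval, hs_le⟩ := sign_step P hF hf hfa hhi
  have hsm0 : AEStronglyMeasurable[m0] s P := (hsm.mono hF).aestronglyMeasurable
  have hsabs : ∀ᵐ ω ∂P, |s ω| ≤ 1 :=
    Filter.Eventually.of_forall fun ω => by rcases hsval ω with h1 | h1 <;> simp [h1]
  have hsi : Integrable s P := integrable_of_bound P hsm0 hsabs
  -- step 2
  set q : Ω' → ℝ := fun ω => s ω - ∫ ω, s ω ∂P with hq_def
  have hqi : Integrable q P := hsi.sub (integrable_const _)
  obtain ⟨t, htm, htval, ht_le⟩ := sign_step P hG hg hgb hqi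
  have hgs : Integrable (fun ω => g ω * s ω) P := hsi.bdd_mul hgm0 hgb
  have hsh : ∫ ω, s ω * h ω ∂P = ∫ ω, g ω * q ω ∂P := by
    have e1 : ∀ ω, s ω * h ω = s ω * g ω - (∫ ω, g ω ∂P) * s ω := fun ω => by
      simp [hh_def]; ring
    have e2 : ∀ ω, g ω * q ω = g ω * s ω - (∫ ω, s ω ∂P) * g ω := fun ω => by
      simp [hq_def]; ring
    rw [integral_congr_ae (Filter.Eventually.of_forall e1),
      integral_congr_ae (Filter.Eventually.of_forall e2),
      integral_sub (by simpa [mul_comm] using hgs) (hsi.const_mul _),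
      integral_sub hgs (hgi.const_mul _), integral_const_mul, integral_const_mul]
    have : ∫ ω, s ω * g ω ∂P = ∫ ω, g ω * s ω ∂P := by
      simp [mul_comm]
    rw [this]; ring
  -- step 3 : ∫ t * h2 = cov(t,s)
  have htabs : ∀ᵐ ω ∂P, |t ω| ≤ (1:ℝ) :=
    Filter.Eventually.of_forall fun ω => by rcases htval ω with h1 | h1 <;> simp [h1]
  have hts : Integrable (fun ω => t ω * s ω) P :=
    hsi.bdd_mul ((htm.mono hG).aestronglyMeasurable) htabs
  have htq : ∫ ω, t ω * q ω ∂P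
      = (∫ ω, t ω * s ω ∂P) - (∫ ω, t ω ∂P) * ∫ ω, s ω ∂P := by
    have e : ∀ ω, t ω * q ω = t ω * s ω - (∫ ω, s ω ∂P) * t ω := fun ω => by
      simp [hq_def]; ring
    have hti : Integrable t P := integrable_of_bound P ((htm.mono hG).aestronglyMeasurable) htabs
    rw [integral_congr_ae (Filter.Eventually.of_forall e),
      integral_sub hts (hti.const_mul _), integral_const_mul]
    ring
  -- final bound
  have hcov_ts : |(∫ ω, t ω * s ω ∂P) - (∫ ω, t ω ∂P) * ∫ ω, s ω ∂P|
      ≤ 2 * @alphaDep Ω' m0 P F G := by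
    have := cov_pm_le (m0 := m0) P hG hF htm hsm htval hsval
    -- this : wrt G F; need symmetry of the expression
    calc |(∫ ω, t ω * s ω ∂P) - (∫ ω, t ω ∂P) * ∫ ω, s ω ∂P|
        = |(∫ ω, s ω * t ω ∂P) - (∫ ω, s ω ∂P) * ∫ ω, t ω ∂P| := by
          rw [mul_comm (∫ ω, t ω ∂P)]
          congr 2
          simp [mul_comm]
      _ ≤ 2 * @alphaDep Ω' m0 P F G := by
          exact cov_pm_le (m0 := m0) P hF hG hsm htm hsval htval
  have hsh_le : ∫ ω, s ω * h ω ∂P ≤ b * (2 * @alphaDep Ω' m0 P F G) := by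
    have h1 : ∫ ω, s ω * h ω ∂P ≤ |∫ ω, g ω * q ω ∂P| := by
      rw [hsh]; exact le_abs_self _
    have hq2 : |∫ ω, g ω * q ω ∂P| ≤ b * ∫ ω, t ω * q ω ∂P := ht_le
    have h3 : ∫ ω, t ω * q ω ∂P ≤ 2 * @alphaDep Ω' m0 P F G := by
      rw [htq]
      exact (le_abs_self _).trans hcov_ts
    calc ∫ ω, s ω * h ω ∂P ≤ b * ∫ ω, t ω * q ω ∂P := h1.trans hq2
      _ ≤ b * (2 * @alphaDep Ω' m0 P F G) := mul_le_mul_of_nonneg_left h3 hb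
  calc |(∫ ω, f ω * g ω ∂P) - (∫ ω, f ω ∂P) * ∫ ω, g ω ∂P|
      = |∫ ω, f ω * h ω ∂P| := by rw [hfh]
    _ ≤ a * ∫ ω, s ω * h ω ∂P := hs_le
    _ ≤ a * (b * (2 * @alphaDep Ω' m0 P F G)) := mul_le_mul_of_nonneg_left hsh_le ha
    _ = 2 * @alphaDep Ω' m0 P F G * a * b := by ring

lemma re_integral (P : Measure Ω') {f : Ω' → ℂ} (hf : Integrable f P) :
    (∫ ω, f ω ∂P).re = ∫ ω, (f ω).re ∂P := by
  simpa using (integral_re hf).symm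

lemma im_integral (P : Measure Ω') {f : Ω' → ℂ} (hf : Integrable f P) :
    (∫ ω, f ω ∂P).im = ∫ ω, (f ω).im ∂P := by
  simpa using (integral_im hf).symm

lemma mul_integral (P : Measure Ω') (u : ℂ) (f : Ω' → ℂ) :
    ∫ ω, u * f ω ∂P = u * ∫ ω, f ω ∂P := by
  simp_rw [← smul_eq_mul]
  exact integral_smul u f


end AuxCov

/-- Ibragimov covariance inequality for bounded complex-valued
random variables. -/
theorem cov_bound_complex
    (P : Measure Ω) [IsProbabilityMeasure P]
    (X Y : Ω → ℂ) (hX : Measurable X) (hY : Measurable Y)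
    (hXb : MemLp X ⊤ P) (hYb : MemLp Y ⊤ P) :
    ‖(∫ ω, X ω * Y ω ∂P) - (∫ ω, X ω ∂P) * (∫ ω, Y ω ∂P)‖
      ≤ 4 * alphaDep P (MeasurableSpace.comap X inferInstance)
            (MeasurableSpace.comap Y inferInstance)
          * (eLpNorm X ⊤ P).toReal * (eLpNorm Y ⊤ P).toReal := by
  set a : ℝ := (eLpNorm X ⊤ P).toReal with ha_def
  set b : ℝ := (eLpNorm Y ⊤ P).toReal with hb_def
  have ha : 0 ≤ a := ENNReal.toReal_nonneg
  have hb : 0 ≤ b := ENNReal.toReal_nonneg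
  have hXa : ∀ᵐ ω ∂P, ‖X ω‖ ≤ a := by
    have h1 : ∀ᵐ ω ∂P, (‖X ω‖₊ : ℝ≥0∞) ≤ eLpNormEssSup X P := ae_le_eLpNormEssSup
    have h2 : eLpNormEssSup X P ≠ ⊤ := by
      rw [← eLpNorm_exponent_top]; exact hXb.2.ne
    filter_upwards [h1] with ω hω
    have := ENNReal.toReal_mono h2 hω
    simpa [ha_def, eLpNorm_exponent_top] using this
  have hYb' : ∀ᵐ ω ∂P, ‖Y ω‖ ≤ b := by
    have h1 : ∀ᵐ ω ∂P, (‖Y ω‖₊ : ℝ≥0∞) ≤ eLpNormEssSup Y P := ae_le_eLpNormEssSup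
    have h2 : eLpNormEssSup Y P ≠ ⊤ := by
      rw [← eLpNorm_exponent_top]; exact hYb.2.ne
    filter_upwards [h1] with ω hω
    have := ENNReal.toReal_mono h2 hω
    simpa [hb_def, eLpNorm_exponent_top] using this
  have hXi : Integrable X P := hXb.integrable le_top
  have hYi : Integrable Y P := hYb.integrable le_top
  set C : ℂ := (∫ ω, X ω * Y ω ∂P) - (∫ ω, X ω ∂P) * (∫ ω, Y ω ∂P) with hC_def
  set u : ℂ := (‖C‖ : ℂ) / C with hu_def
  have hu : ‖u‖ ≤ 1 := by
    rcases eq_or_ne C 0 with h | h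
    · simp [hu_def, h]
    · rw [hu_def, norm_div, Complex.norm_real, norm_norm,
        div_self (by simpa using h)]
  have huC : (‖C‖ : ℂ) = u * C := by
    rcases eq_or_ne C 0 with h | h
    · simp [hu_def, h]
    · rw [hu_def, div_mul_cancel₀ _ h]
  -- the rotated variable
  set Z : Ω → ℂ := fun ω => u * X ω with hZ_def
  have hZa : ∀ᵐ ω ∂P, ‖Z ω‖ ≤ a := by
    filter_upwards [hXa] with ω hω
    rw [hZ_def]
    calc ‖u * X ω‖ = ‖u‖ * ‖X ω‖ := norm_mul _ _
      _ ≤ 1 * a := mul_le_mul hu hω (norm_nonneg _) zero_le_one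
      _ = a := one_mul a
  have hZm : Measurable Z := hX.const_mul u
  have hZi : Integrable Z P := hXi.const_mul u
  have hZYi : Integrable (fun ω => Z ω * Y ω) P :=
    hYi.bdd_mul hZm.aestronglyMeasurable hZa
  -- sigma-algebras
  have hm1 := hX.comap_le
  have hm2 := hY.comap_le
  have hXm1 : Measurable[MeasurableSpace.comap X inferInstance] X :=
    Measurable.of_comap_le le_rfl
  have hYm2 : Measurable[MeasurableSpace.comap Y inferInstance] Y :=
    Measurable.of_comap_le le_rfl
  -- real and imaginary parts
  set f1 : Ω → ℝ := fun ω => (Z ω).re with hf1_def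
  set f2 : Ω → ℝ := fun ω => (Z ω).im with hf2_def
  set g1 : Ω → ℝ := fun ω => (Y ω).re with hg1_def
  set g2 : Ω → ℝ := fun ω => (Y ω).im with hg2_def
  have hf1m : StronglyMeasurable[MeasurableSpace.comap X inferInstance] f1 :=
    (Complex.measurable_re.comp (hXm1.const_mul u)).stronglyMeasurable
  have hf2m : StronglyMeasurable[MeasurableSpace.comap X inferInstance] f2 :=
    (Complex.measurable_im.comp (hXm1.const_mul u)).stronglyMeasurable
  have hg1m : StronglyMeasurable[MeasurableSpace.comap Y inferInstance] g1 :=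
    (Complex.measurable_re.comp hYm2).stronglyMeasurable
  have hg2m : StronglyMeasurable[MeasurableSpace.comap Y inferInstance] g2 :=
    (Complex.measurable_im.comp hYm2).stronglyMeasurable
  have hf1a : ∀ᵐ ω ∂P, |f1 ω| ≤ a := by
    filter_upwards [hZa] with ω hω
    exact (Complex.abs_re_le_norm _).trans hω
  have hf2a : ∀ᵐ ω ∂P, |f2 ω| ≤ a := by
    filter_upwards [hZa] with ω hω
    exact (Complex.abs_im_le_norm _).trans hω
  have hg1b : ∀ᵐ ω ∂P, |g1 ω| ≤ b := by
    filter_upwards [hYb'] with ω hω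
    exact (Complex.abs_re_le_norm _).trans hω
  have hg2b : ∀ᵐ ω ∂P, |g2 ω| ≤ b := by
    filter_upwards [hYb'] with ω hω
    exact (Complex.abs_im_le_norm _).trans hω
  -- integrability of products
  have hf1i : Integrable f1 P := hZi.re
  have hf2i : Integrable f2 P := hZi.im
  have hg1i : Integrable g1 P := hYi.re
  have hg2i : Integrable g2 P := hYi.im
  have hf1g1 : Integrable (fun ω => f1 ω * g1 ω) P :=
    hg1i.bdd_mul ((hf1m.mono hm1).aestronglyMeasurable) (by simpa using hf1a)
  have hf2g2 : Integrable (fun ω => f2 ω * g2 ω) P :=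
    hg2i.bdd_mul ((hf2m.mono hm1).aestronglyMeasurable) (by simpa using hf2a)
  -- key identity
  have hE : (u * C : ℂ) = (∫ ω, Z ω * Y ω ∂P) - (∫ ω, Z ω ∂P) * ∫ ω, Y ω ∂P := by
    rw [hC_def, mul_sub]
    congr 1
    · rw [hZ_def]
      simp_rw [mul_assoc]
      exact (mul_integral P u (fun ω => X ω * Y ω)).symm
    · rw [hZ_def, ← mul_assoc]
      congr 1
      exact (mul_integral P u X).symm
  have habs : ‖C‖
      = ((∫ ω, f1 ω * g1 ω ∂P) - (∫ ω, f1 ω ∂P) * ∫ ω, g1 ω ∂P)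
        - ((∫ ω, f2 ω * g2 ω ∂P) - (∫ ω, f2 ω ∂P) * ∫ ω, g2 ω ∂P) := by
    have h1 : ‖C‖ = (u * C).re := by
      rw [← huC, Complex.ofReal_re]
    rw [h1, hE, Complex.sub_re, Complex.mul_re]
    have h2 : (∫ ω, Z ω * Y ω ∂P).re = (∫ ω, f1 ω * g1 ω ∂P) - ∫ ω, f2 ω * g2 ω ∂P := by
      rw [re_integral P hZYi]
      have : ∀ ω, (Z ω * Y ω).re = f1 ω * g1 ω - f2 ω * g2 ω := fun ω => Complex.mul_re _ _
      rw [integral_congr_ae (Filter.Eventually.of_forall this), integral_sub hf1g1 hf2g2]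
    rw [h2, re_integral P hZi, im_integral P hZi, re_integral P hYi, im_integral P hYi]
    ring
  -- apply the real covariance bound twice
  have hcov1 := cov_real P hm1 hm2 hf1m hg1m hf1a hg1b
  have hcov2 := cov_real P hm1 hm2 hf2m hg2m hf2a hg2b
  rw [habs]
  calc ((∫ ω, f1 ω * g1 ω ∂P) - (∫ ω, f1 ω ∂P) * ∫ ω, g1 ω ∂P)
        - ((∫ ω, f2 ω * g2 ω ∂P) - (∫ ω, f2 ω ∂P) * ∫ ω, g2 ω ∂P)
      ≤ |(∫ ω, f1 ω * g1 ω ∂P) - (∫ ω, f1 ω ∂P) * ∫ ω, g1 ω ∂P|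
        + |(∫ ω, f2 ω * g2 ω ∂P) - (∫ ω, f2 ω ∂P) * ∫ ω, g2 ω ∂P| := by
        have := abs_sub_abs_le_abs_sub ((∫ ω, f1 ω * g1 ω ∂P) - (∫ ω, f1 ω ∂P) * ∫ ω, g1 ω ∂P)
          ((∫ ω, f2 ω * g2 ω ∂P) - (∫ ω, f2 ω ∂P) * ∫ ω, g2 ω ∂P)
        have h3 := le_abs_self ((∫ ω, f1 ω * g1 ω ∂P) - (∫ ω, f1 ω ∂P) * ∫ ω, g1 ω ∂P)
        have h4 := neg_abs_le ((∫ ω, f2 ω * g2 ω ∂P) - (∫ ω, f2 ω ∂P) * ∫ ω, g2 ω ∂P)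
        linarith
    _ ≤ 2 * alphaDep P (MeasurableSpace.comap X inferInstance)
            (MeasurableSpace.comap Y inferInstance) * a * b
        + 2 * alphaDep P (MeasurableSpace.comap X inferInstance)
            (MeasurableSpace.comap Y inferInstance) * a * b := add_le_add hcov1 hcov2
    _ = 4 * alphaDep P (MeasurableSpace.comap X inferInstance)
            (MeasurableSpace.comap Y inferInstance) * a * b := by ring


end ADE
end
end
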